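/- arXiv:2309.04923 — 11 statements merged into one kernel-verified Lean document; each statement's English description precedes it below -/
import Mathlib

section
/- For every finitely supported sequence A : ℕ → ℂ with A_0 = 0, the inequality ∑_{n=1}^∞ |A_n - A_{n-1}|^2 ≥ ∑_{n=1}^∞ w_n |A_n|^2 holds, where w_n = 2 - sqrt(1 - 1/n) - sqrt(1 + 1/n). -/
lemma aux_key (a b s t : ℝ) (hs : 0 ≤ s) (ht : 0 ≤ t)
    (hst : s * t = 1 ∨ b = 0) :
    (1 - s) * a ^ 2 + (1 - t) * b ^ 2 ≤ (a - b) ^ 2 := by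
  rcases hst with h | h
  · have hs' : 0 < s := by
      rcases lt_or_eq_of_le hs with h' | h'
      · exact h'
      · exfalso; nlinarith
    nlinarith [sq_nonneg (s * a - b), mul_pos hs' hs', sq_nonneg b, sq_nonneg a,
      mul_nonneg (le_of_lt hs') (sq_nonneg (a - b))]
  · subst h
    nlinarith [mul_nonneg hs (sq_nonneg a)]

theorem stmt_1 (A : ℕ → ℂ) (hsupp : (Function.support A).Finite) (h0 : A 0 = 0) :
    (∑' n : ℕ, ‖A (n + 1) - A n‖ ^ 2) ≥
      ∑' n : ℕ, (2 - Real.sqrt (1 - 1 / ((n : ℝ) + 1)) - Real.sqrt (1 + 1 / ((n : ℝ) + 1))) *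
        ‖A (n + 1)‖ ^ 2 := by
  classical
  obtain ⟨N, hN⟩ : ∃ N, ∀ n, N ≤ n → A n = 0 := by
    refine ⟨hsupp.toFinset.sup id + 1, fun n hn => ?_⟩
    by_contra hA
    have hmem : n ∈ hsupp.toFinset := by simpa [Function.mem_support] using hA
    have := Finset.le_sup (f := id) hmem
    simp only [id] at this
    omega
  have hL : (∑' n : ℕ, ‖A (n + 1) - A n‖ ^ 2)
      = ∑ n ∈ Finset.range N, ‖A (n + 1) - A n‖ ^ 2 := by
    refine tsum_eq_sum fun n hn => ?_
    have hn' : N ≤ n := by simpa using hn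
    rw [hN n hn', hN (n + 1) (by omega)]
    simp
  have hR : (∑' n : ℕ, (2 - Real.sqrt (1 - 1 / ((n : ℝ) + 1)) -
        Real.sqrt (1 + 1 / ((n : ℝ) + 1))) * ‖A (n + 1)‖ ^ 2)
      = ∑ n ∈ Finset.range N, (2 - Real.sqrt (1 - 1 / ((n : ℝ) + 1)) -
        Real.sqrt (1 + 1 / ((n : ℝ) + 1))) * ‖A (n + 1)‖ ^ 2 := by
    refine tsum_eq_sum fun n hn => ?_
    have hn' : N ≤ n := by simpa using hn
    rw [hN (n + 1) (by omega)]
    simp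
  rw [hL, hR, ge_iff_le]
  -- the per-term lower bound
  set F : ℕ → ℝ := fun n =>
    (1 - Real.sqrt ((n : ℝ) / ((n : ℝ) + 1))) * ‖A (n + 1)‖ ^ 2 +
      (1 - Real.sqrt (((n : ℝ) + 1) / (n : ℝ))) * ‖A n‖ ^ 2 with hF
  have step1 : ∀ n : ℕ, F n ≤ ‖A (n + 1) - A n‖ ^ 2 := by
    intro n
    have hcase : Real.sqrt ((n : ℝ) / ((n : ℝ) + 1)) *
        Real.sqrt (((n : ℝ) + 1) / (n : ℝ)) = 1 ∨ ‖A n‖ = 0 := by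
      rcases Nat.eq_zero_or_pos n with h | h
      · right; simp [h, h0]
      · left
        have hn0 : (n : ℝ) ≠ 0 := Nat.cast_ne_zero.mpr (by omega)
        rw [← Real.sqrt_mul (by positivity)]
        have : (n : ℝ) / ((n : ℝ) + 1) * (((n : ℝ) + 1) / (n : ℝ)) = 1 := by
          field_simp
        rw [this, Real.sqrt_one]
    have key := aux_key ‖A (n + 1)‖ ‖A n‖ _ _ (Real.sqrt_nonneg _)
      (Real.sqrt_nonneg _) hcase
    have habs : (‖A (n + 1)‖ - ‖A n‖) ^ 2 ≤ ‖A (n + 1) - A n‖ ^ 2 := by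
      have h1 : |‖A (n + 1)‖ - ‖A n‖| ≤ ‖A (n + 1) - A n‖ :=
        abs_norm_sub_norm_le _ _
      calc (‖A (n + 1)‖ - ‖A n‖) ^ 2 = |‖A (n + 1)‖ - ‖A n‖| ^ 2 := (sq_abs _).symm
        _ ≤ ‖A (n + 1) - A n‖ ^ 2 := by
            exact pow_le_pow_left₀ (abs_nonneg _) h1 2
    exact le_trans key habs
  have step2 : ∑ n ∈ Finset.range N, (2 - Real.sqrt (1 - 1 / ((n : ℝ) + 1)) -
        Real.sqrt (1 + 1 / ((n : ℝ) + 1))) * ‖A (n + 1)‖ ^ 2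
      = ∑ n ∈ Finset.range N, F n := by
    set G : ℕ → ℝ := fun n => (1 - Real.sqrt (((n : ℝ) + 1) / (n : ℝ))) * ‖A n‖ ^ 2 with hG
    have hshift : ∑ n ∈ Finset.range N, G n = ∑ n ∈ Finset.range N, G (n + 1) := by
      have h1 : ∑ n ∈ Finset.range (N + 1), G n
          = ∑ n ∈ Finset.range N, G n + G N := Finset.sum_range_succ _ _
      have h2 : ∑ n ∈ Finset.range (N + 1), G n
          = ∑ n ∈ Finset.range N, G (n + 1) + G 0 := Finset.sum_range_succ' _ _
      have hGN : G N = 0 := by simp [hG, hN N le_rfl]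
      have hG0 : G 0 = 0 := by simp [hG, h0]
      rw [hGN] at h1; rw [hG0] at h2
      linarith
    calc ∑ n ∈ Finset.range N, (2 - Real.sqrt (1 - 1 / ((n : ℝ) + 1)) -
          Real.sqrt (1 + 1 / ((n : ℝ) + 1))) * ‖A (n + 1)‖ ^ 2
        = ∑ n ∈ Finset.range N,
            ((1 - Real.sqrt ((n : ℝ) / ((n : ℝ) + 1))) * ‖A (n + 1)‖ ^ 2 + G (n + 1)) := by
          refine Finset.sum_congr rfl fun n _ => ?_
          have hne : ((n : ℝ) + 1) ≠ 0 := by positivity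
          have e1 : Real.sqrt (1 - 1 / ((n : ℝ) + 1)) = Real.sqrt ((n : ℝ) / ((n : ℝ) + 1)) := by
            congr 1
            field_simp
            ring
          have e2 : Real.sqrt (1 + 1 / ((n : ℝ) + 1))
              = Real.sqrt (((n : ℝ) + 1 + 1) / ((n : ℝ) + 1)) := by
            congr 1
            field_simp
          simp only [hG]
          push_cast
          rw [e1, e2]
          ring
        _ = ∑ n ∈ Finset.range N,
            (1 - Real.sqrt ((n : ℝ) / ((n : ℝ) + 1))) * ‖A (n + 1)‖ ^ 2
            + ∑ n ∈ Finset.range N, G (n + 1) := Finset.sum_add_distrib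
        _ = ∑ n ∈ Finset.range N,
            (1 - Real.sqrt ((n : ℝ) / ((n : ℝ) + 1))) * ‖A (n + 1)‖ ^ 2
            + ∑ n ∈ Finset.range N, G n := by rw [hshift]
        _ = ∑ n ∈ Finset.range N, F n := by
          rw [← Finset.sum_add_distrib]
  rw [step2]
  exact Finset.sum_le_sum fun n _ => step1 n
end

section
/- Let λ : ℕ → ℝ be strictly positive and let μ : ℕ → ℝ be strictly positive with μ_0 = 0 allowed to be replaced by a positive value; define σ_n = 1/λ_n + 1/λ_{n+1} - μ_{n-1}/(λ_n μ_n) - μ_{n+1}/(λ_{n+1} μ_n). Then for every finitely supported A : ℕ → ℂ with A_0 = 0, ∑_{n=1}^∞ |A_n - A_{n-1}|^2 / λ_n ≥ ∑_{n=1}^∞ σ_n |A_n|^2. -/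
theorem stmt_2 (lam mu : ℕ → ℝ) (hlam : ∀ n, 1 ≤ n → 0 < lam n)
    (hmu : ∀ n, 1 ≤ n → 0 < mu n) (hmu0 : mu 0 = 0)
    (A : ℕ → ℂ) (hsupp : (Function.support A).Finite) (h0 : A 0 = 0) :
    (∑' n : ℕ, ‖A (n + 1) - A n‖ ^ 2 / lam (n + 1)) ≥
      ∑' n : ℕ,
        (1 / lam (n + 1) + 1 / lam (n + 2) - mu n / (lam (n + 1) * mu (n + 1))
          - mu (n + 2) / (lam (n + 2) * mu (n + 1))) * ‖A (n + 1)‖ ^ 2 := by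
  obtain ⟨N, hN⟩ := hsupp.bddAbove
  have hA : ∀ n, N + 1 ≤ n → A n = 0 := by
    intro n hn
    by_contra h
    have := hN (show n ∈ Function.support A from h)
    omega
  set M := N + 1 with hM
  set u : ℕ → ℝ := fun n => (1 - mu n / mu (n + 1)) / lam (n + 1) * ‖A (n + 1)‖ ^ 2 with hu
  set v : ℕ → ℝ := fun n => (1 - mu (n + 1) / mu n) / lam (n + 1) * ‖A n‖ ^ 2 with hv
  have key : ∀ n, u n + v n ≤ ‖A (n + 1) - A n‖ ^ 2 / lam (n + 1) := by
    intro n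
    have hl := hlam (n + 1) (by omega)
    rcases Nat.eq_zero_or_pos n with rfl | hn
    · simp [hu, hv, h0, hmu0]
      exact le_of_eq (by rw [div_eq_mul_inv]; ring)
    · have hmn := hmu n hn
      have hmn1 := hmu (n + 1) (by omega)
      have ht : 0 < mu n / mu (n + 1) := div_pos hmn hmn1
      set t := mu n / mu (n + 1) with htdef
      set x := ‖A (n + 1)‖ with hx
      set y := ‖A n‖ with hy
      have hinv : mu (n + 1) / mu n = 1 / t := by
        rw [htdef, one_div_div]
      have hnorm : (x - y) ^ 2 ≤ ‖A (n + 1) - A n‖ ^ 2 := by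
        have h1 : |x - y| ≤ ‖A (n + 1) - A n‖ := abs_norm_sub_norm_le _ _
        calc (x - y) ^ 2 = |x - y| ^ 2 := (sq_abs _).symm
          _ ≤ _ := by gcongr
      have main : (1 - t) * x ^ 2 + (1 - 1 / t) * y ^ 2 ≤ (x - y) ^ 2 := by
        have h1 : 1 / t * t = 1 := one_div_mul_cancel ht.ne'
        nlinarith [mul_nonneg (one_div_pos.mpr ht).le (sq_nonneg (t * x - y)), sq_nonneg (x - y)]
      simp only [hu, hv]
      rw [hinv, ← htdef, ← hx, ← hy]
      calc (1 - t) / lam (n + 1) * x ^ 2 + (1 - 1 / t) / lam (n + 1) * y ^ 2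
          = ((1 - t) * x ^ 2 + (1 - 1 / t) * y ^ 2) / lam (n + 1) := by ring
        _ ≤ (x - y) ^ 2 / lam (n + 1) := by gcongr
        _ ≤ ‖A (n + 1) - A n‖ ^ 2 / lam (n + 1) := by gcongr
  have hsplit : ∀ n, (1 / lam (n + 1) + 1 / lam (n + 2) - mu n / (lam (n + 1) * mu (n + 1))
      - mu (n + 2) / (lam (n + 2) * mu (n + 1))) * ‖A (n + 1)‖ ^ 2 = u n + v (n + 1) := by
    intro n
    have hl1 := (hlam (n + 1) (by omega)).ne'
    have hl2 := (hlam (n + 2) (by omega)).ne'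
    have hm1 := (hmu (n + 1) (by omega)).ne'
    simp only [hu, hv]
    field_simp
    ring
  rw [ge_iff_le]
  rw [tsum_eq_sum (s := Finset.range M)
    (by intro n hn
        simp only [Finset.mem_range, not_lt] at hn
        rw [hA (n + 1) (by omega)]
        simp),
    tsum_eq_sum (s := Finset.range M)
    (by intro n hn
        simp only [Finset.mem_range, not_lt] at hn
        rw [hA (n + 1) (by omega), hA n (by omega)]
        simp)]
  calc ∑ n ∈ Finset.range M, (1 / lam (n + 1) + 1 / lam (n + 2)
        - mu n / (lam (n + 1) * mu (n + 1))
        - mu (n + 2) / (lam (n + 2) * mu (n + 1))) * ‖A (n + 1)‖ ^ 2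
      = ∑ n ∈ Finset.range M, (u n + v (n + 1)) := by
        exact Finset.sum_congr rfl fun n _ => hsplit n
    _ = ∑ n ∈ Finset.range M, u n + ∑ n ∈ Finset.range M, v (n + 1) := Finset.sum_add_distrib
    _ = ∑ n ∈ Finset.range M, u n + ∑ n ∈ Finset.range M, v n := by
        have h1 : ∑ n ∈ Finset.range (M + 1), v n
            = ∑ n ∈ Finset.range M, v (n + 1) + v 0 := Finset.sum_range_succ' v M
        have h2 : ∑ n ∈ Finset.range (M + 1), v n
            = ∑ n ∈ Finset.range M, v n + v M := Finset.sum_range_succ v M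
        have hv0 : v 0 = 0 := by simp [hv, h0]
        have hvM : v M = 0 := by simp [hv, hA M le_rfl]
        rw [hv0] at h1
        rw [hvM] at h2
        linarith
    _ = ∑ n ∈ Finset.range M, (u n + v n) := Finset.sum_add_distrib.symm
    _ ≤ ∑ n ∈ Finset.range M, ‖A (n + 1) - A n‖ ^ 2 / lam (n + 1) :=
        Finset.sum_le_sum fun n _ => key n
end

section
/- For every finitely supported complex sequence A with A_0 = 0, the weighted Hardy-type inequality ∑_{n=1}^∞ |A_n|^2 / (n(n+1)^2) < ∑_{n=1}^∞ η_n |A_n|^2 ≤ ∑_{n=1}^∞ n |a_n|^2 holds whenever A is not identically zero, where η_n = 1/(n^2(n+1)) and a_n = (A_n - A_{n-1})/n. -/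
theorem stmt_3 (A : ℕ → ℂ) (hsupp : (Function.support A).Finite) (h0 : A 0 = 0)
    (hne : A ≠ 0) :
    (∑' n : ℕ, ‖A (n + 1)‖ ^ 2 / (((n : ℝ) + 1) * ((n : ℝ) + 2) ^ 2)) <
      (∑' n : ℕ, (1 / (((n : ℝ) + 1) ^ 2 * ((n : ℝ) + 2))) * ‖A (n + 1)‖ ^ 2) ∧
    (∑' n : ℕ, (1 / (((n : ℝ) + 1) ^ 2 * ((n : ℝ) + 2))) * ‖A (n + 1)‖ ^ 2) ≤
      ∑' n : ℕ, ((n : ℝ) + 1) * ‖(A (n + 1) - A n) / ((n : ℂ) + 1)‖ ^ 2 := by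
  obtain ⟨N, hNb⟩ := hsupp.bddAbove
  have hzero : ∀ k, N < k → A k = 0 := by
    intro k hk
    by_contra h
    exact absurd (hNb (Function.mem_support.mpr h)) (not_le.mpr hk)
  set M := N + 1 with hM
  set f₁ : ℕ → ℝ := fun n => ‖A (n + 1)‖ ^ 2 / (((n : ℝ) + 1) * ((n : ℝ) + 2) ^ 2) with hf₁
  set f₂ : ℕ → ℝ := fun n => (1 / (((n : ℝ) + 1) ^ 2 * ((n : ℝ) + 2))) * ‖A (n + 1)‖ ^ 2 with hf₂
  set f₃ : ℕ → ℝ := fun n => ((n : ℝ) + 1) * ‖(A (n + 1) - A n) / ((n : ℂ) + 1)‖ ^ 2 with hf₃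
  have hA1 : ∀ n, n ∉ Finset.range M → A (n + 1) = 0 := by
    intro n hn
    simp only [Finset.mem_range, not_lt] at hn
    exact hzero _ (by omega)
  have hA0 : ∀ n, n ∉ Finset.range M → A n = 0 := by
    intro n hn
    simp only [Finset.mem_range, not_lt] at hn
    exact hzero _ (by omega)
  have ht₁ : ∑' n, f₁ n = ∑ n ∈ Finset.range M, f₁ n := by
    refine tsum_eq_sum ?_
    intro n hn; simp [hf₁, hA1 n hn]
  have ht₂ : ∑' n, f₂ n = ∑ n ∈ Finset.range M, f₂ n := by
    refine tsum_eq_sum ?_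
    intro n hn; simp [hf₂, hA1 n hn]
  have ht₃ : ∑' n, f₃ n = ∑ n ∈ Finset.range M, f₃ n := by
    refine tsum_eq_sum ?_
    intro n hn; simp [hf₃, hA1 n hn, hA0 n hn]
  -- the nonzero witness
  obtain ⟨k, hk⟩ : ∃ k, A k ≠ 0 := Function.ne_iff.mp hne
  have hk0 : k ≠ 0 := fun h => hk (h ▸ h0)
  have hkN : k ≤ N := hNb (Function.mem_support.mpr hk)
  have hkmem : k - 1 ∈ Finset.range M := by simp [hM]; omega
  have hkA : A ((k - 1) + 1) ≠ 0 := by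
    have : (k - 1) + 1 = k := by omega
    rw [this]; exact hk
  constructor
  · rw [ht₁, ht₂]
    refine Finset.sum_lt_sum ?_ ⟨k - 1, hkmem, ?_⟩
    · intro i _
      simp only [hf₁, hf₂, one_div, inv_mul_eq_div]
      have h1 : (0:ℝ) < ((i : ℝ) + 1) ^ 2 * ((i : ℝ) + 2) := by positivity
      have h2 : ((i : ℝ) + 1) ^ 2 * ((i : ℝ) + 2) ≤ ((i : ℝ) + 1) * ((i : ℝ) + 2) ^ 2 := by
        nlinarith [Nat.cast_nonneg (α := ℝ) i]
      exact div_le_div_of_nonneg_left (by positivity) h1 h2 |>.trans_eq rfl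
    · simp only [hf₁, hf₂, one_div, inv_mul_eq_div]
      set i := k - 1
      have hc : (0:ℝ) < ‖A (i + 1)‖ ^ 2 := by
        have := norm_pos_iff.mpr hkA
        positivity
      have h1 : (0:ℝ) < ((i : ℝ) + 1) ^ 2 * ((i : ℝ) + 2) := by positivity
      have h2 : ((i : ℝ) + 1) ^ 2 * ((i : ℝ) + 2) < ((i : ℝ) + 1) * ((i : ℝ) + 2) ^ 2 := by
        nlinarith [Nat.cast_nonneg (α := ℝ) i]
      exact div_lt_div_of_pos_left hc h1 h2
  · rw [ht₂, ht₃]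
    set g : ℕ → ℝ := fun m => ‖A m‖ ^ 2 / ((m : ℝ) * ((m : ℝ) + 1)) with hg
    have hpt : ∀ m : ℕ, f₂ m ≤ f₃ m + (g m - g (m + 1)) := by
      intro m
      have hnorm : ‖(A (m + 1) - A m) / ((m : ℂ) + 1)‖ = ‖A (m + 1) - A m‖ / ((m : ℝ) + 1) := by
        rw [norm_div]
        congr 1
        have : ((m : ℂ) + 1) = ((m + 1 : ℕ) : ℂ) := by push_cast; ring
        rw [this, Complex.norm_natCast]; push_cast; ring
      simp only [hf₂, hf₃, hg]
      push_cast
      rw [hnorm]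
      set x := ‖A (m + 1) - A m‖ with hx
      set b := ‖A m‖ with hb
      set c := ‖A (m + 1)‖ with hc
      have hxnn : 0 ≤ x := norm_nonneg _
      have hbnn : 0 ≤ b := norm_nonneg _
      have hcnn : 0 ≤ c := norm_nonneg _
      have hcxb : c ≤ x + b := by
        calc c = ‖(A (m + 1) - A m) + A m‖ := by rw [hc]; ring_nf
        _ ≤ x + b := norm_add_le _ _
      rcases Nat.eq_zero_or_pos m with hm0 | hmpos
      · subst hm0
        have hb0 : b = 0 := by rw [hb, h0, norm_zero]
        have hx0 : x = c := by rw [hx, hc, h0, sub_zero]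
        rw [hb0, hx0]
        norm_num
        linarith [sq_nonneg c]
      · have hn1 : (1:ℝ) ≤ (m : ℝ) := by exact_mod_cast hmpos
        set n := (m : ℝ) with hn
        have hn0 : (0:ℝ) < n := by linarith
        have hsq : c ^ 2 ≤ (x + b) ^ 2 := by nlinarith
        have key : n * (n + 1) * c ^ 2 ≤ (n + 1) ^ 2 * (n * x ^ 2 + b ^ 2) := by
          nlinarith [sq_nonneg (n * x - b), mul_nonneg hn0.le (sub_nonneg.mpr hsq)]
        have eL : 1/((n+1)^2*(n+2)) * c^2 + c^2/((n+1)*(n+1+1)) = c^2/(n+1)^2 := by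
          field_simp
          ring
        have eR : (n+1)*(x/(n+1))^2 + b^2/(n*(n+1)) = (n * x^2 + b^2)/(n*(n+1)) := by
          field_simp
        have h2 : c^2/(n+1)^2 ≤ (n * x^2 + b^2)/(n*(n+1)) := by
          rw [div_le_div_iff₀ (by positivity) (by positivity)]
          calc c ^ 2 * (n * (n + 1)) = n * (n + 1) * c ^ 2 := by ring
            _ ≤ (n + 1) ^ 2 * (n * x ^ 2 + b ^ 2) := key
            _ = (n * x ^ 2 + b ^ 2) * (n + 1) ^ 2 := by ring
        linarith [eL, eR, h2]
    calc ∑ m ∈ Finset.range M, f₂ m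
        ≤ ∑ m ∈ Finset.range M, (f₃ m + (g m - g (m + 1))) :=
          Finset.sum_le_sum fun m _ => hpt m
      _ = ∑ m ∈ Finset.range M, f₃ m + (g 0 - g M) := by
          rw [Finset.sum_add_distrib, Finset.sum_range_sub' g]
      _ ≤ ∑ m ∈ Finset.range M, f₃ m := by
          have hg0 : g 0 = 0 := by simp [hg, h0]
          have hgM : g M = 0 := by simp [hg, hzero M (by omega)]
          simp [hg0, hgM]
end

section
/- For every positive integer n, G(n) > (36/16) n^{5/4}, where G(n) = n^{1/2}(2n+3)^2 (3/(4 n^{1/4}) + 3/(32 n^{5/4})) + (2n+1)^{3/2} ((n+2)(2n+3))^{1/2} (3/(32 n^{5/4}) - 3/(4 n^{1/4})). -/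
theorem stmt_5 (n : ℕ) (hn : 1 ≤ n) :
    (n : ℝ) ^ ((1 : ℝ) / 2) * (2 * (n : ℝ) + 3) ^ 2 *
        (3 / (4 * (n : ℝ) ^ ((1 : ℝ) / 4)) + 3 / (32 * (n : ℝ) ^ ((5 : ℝ) / 4)))
      + (2 * (n : ℝ) + 1) ^ ((3 : ℝ) / 2) * (((n : ℝ) + 2) * (2 * (n : ℝ) + 3)) ^ ((1 : ℝ) / 2) *
        (3 / (32 * (n : ℝ) ^ ((5 : ℝ) / 4)) - 3 / (4 * (n : ℝ) ^ ((1 : ℝ) / 4)))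
      > (36 / 16) * (n : ℝ) ^ ((5 : ℝ) / 4) := by
  set x : ℝ := (n : ℝ) with hxdef
  have hx1 : (1 : ℝ) ≤ x := by rw [hxdef]; exact_mod_cast hn
  have hx0 : (0 : ℝ) < x := by linarith
  set u : ℝ := x ^ ((1 : ℝ) / 4) with hudef
  have hu0 : (0 : ℝ) < u := Real.rpow_pos_of_pos hx0 _
  have hu1 : (1 : ℝ) ≤ u := Real.one_le_rpow hx1 (by norm_num)
  have hxu : u ^ 4 = x := by
    rw [hudef, ← Real.rpow_natCast (x ^ ((1:ℝ)/4)) 4, ← Real.rpow_mul hx0.le]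
    norm_num
  have h12 : x ^ ((1 : ℝ) / 2) = u ^ 2 := by
    rw [hudef, ← Real.rpow_natCast (x ^ ((1:ℝ)/4)) 2, ← Real.rpow_mul hx0.le]
    norm_num
  have h54 : x ^ ((5 : ℝ) / 4) = u ^ 5 := by
    rw [hudef, ← Real.rpow_natCast (x ^ ((1:ℝ)/4)) 5, ← Real.rpow_mul hx0.le]
    norm_num
  set s : ℝ := Real.sqrt ((2 * x + 1) ^ 3 * ((x + 2) * (2 * x + 3))) with hsdef
  have hb : (2 * x + 1) ^ ((3 : ℝ) / 2) * ((x + 2) * (2 * x + 3)) ^ ((1 : ℝ) / 2) = s := by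
    rw [hsdef, Real.sqrt_mul (by positivity), show ((3:ℝ)/2) = ((3:ℕ):ℝ) * (1/2) by norm_num,
      Real.rpow_mul (by positivity : (0:ℝ) ≤ 2 * x + 1), Real.rpow_natCast]
    rw [Real.sqrt_eq_rpow, Real.sqrt_eq_rpow]
  have hs0 : 0 ≤ s := Real.sqrt_nonneg _
  -- upper bound on s
  have hsU : s ≤ u ^ 2 * (4 * u ^ 8 + 10 * u ^ 4 + 7) := by
    have h1 : (2 * x + 1) ^ 3 * ((x + 2) * (2 * x + 3))
        ≤ (u ^ 2 * (4 * u ^ 8 + 10 * u ^ 4 + 7)) ^ 2 := by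
      have hxx : x = u ^ 4 := hxu.symm
      rw [hxx]
      nlinarith [pow_le_pow_left₀ (by norm_num : (0:ℝ) ≤ 1) hu1 12,
        pow_le_pow_left₀ (by norm_num : (0:ℝ) ≤ 1) hu1 8,
        pow_le_pow_left₀ (by norm_num : (0:ℝ) ≤ 1) hu1 4]
    calc s ≤ Real.sqrt ((u ^ 2 * (4 * u ^ 8 + 10 * u ^ 4 + 7)) ^ 2) :=
          Real.sqrt_le_sqrt h1
      _ = u ^ 2 * (4 * u ^ 8 + 10 * u ^ 4 + 7) := Real.sqrt_sq (by positivity)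
  -- lower bound on s
  have hsL : u ^ 2 * (4 * u ^ 8 + 10 * u ^ 4) ≤ s := by
    have h1 : (u ^ 2 * (4 * u ^ 8 + 10 * u ^ 4)) ^ 2
        ≤ (2 * x + 1) ^ 3 * ((x + 2) * (2 * x + 3)) := by
      have hxx : x = u ^ 4 := hxu.symm
      rw [hxx]
      nlinarith [pow_pos hu0 12, pow_pos hu0 8, pow_pos hu0 4, pow_pos hu0 20]
    calc u ^ 2 * (4 * u ^ 8 + 10 * u ^ 4)
        = Real.sqrt ((u ^ 2 * (4 * u ^ 8 + 10 * u ^ 4)) ^ 2) :=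
          (Real.sqrt_sq (by positivity)).symm
      _ ≤ s := Real.sqrt_le_sqrt h1
  rw [h12, h54, hb]
  rw [gt_iff_lt, ← sub_pos]
  have hxx : x = u ^ 4 := hxu.symm
  have key : u ^ 2 * (2 * x + 3) ^ 2 * (3 / (4 * u) + 3 / (32 * u ^ 5))
      + s * (3 / (32 * u ^ 5) - 3 / (4 * u)) - 36 / 16 * u ^ 5
      = ((2 * u ^ 4 + 3) ^ 2 * (24 * u ^ 6 + 3 * u ^ 2) + s * (3 - 24 * u ^ 4)
          - 72 * u ^ 10) / (32 * u ^ 5) := by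
    rw [hxx]
    field_simp
    ring
  rw [key]
  apply div_pos _ (by positivity)
  have hU24 : 24 * u ^ 4 * s ≤ 24 * u ^ 4 * (u ^ 2 * (4 * u ^ 8 + 10 * u ^ 4 + 7)) :=
    mul_le_mul_of_nonneg_left hsU (by positivity)
  nlinarith [pow_pos hu0 10, pow_pos hu0 6, pow_pos hu0 2, hsL, hU24,
    pow_le_pow_left₀ (by norm_num : (0:ℝ) ≤ 1) hu1 6]
end

section
/- For every positive integer n, F(n) > G(n), where F(n) = n^{1/2}(2n+3)^2 (n^{3/4} - (n-1)^{3/4}) + (2n+1)^{3/2} ((n+2)(2n+3))^{1/2} (n^{3/4} - (n+1)^{3/4}) and G(n) = n^{1/2}(2n+3)^2 (3/(4 n^{1/4}) + 3/(32 n^{5/4})) + (2n+1)^{3/2} ((n+2)(2n+3))^{1/2} (3/(32 n^{5/4}) - 3/(4 n^{1/4})). -/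
lemma key1 (s : ℝ) (hs : 1 ≤ s) :
    (s - 1) ^ 3 * s ^ 9 ≤ (s ^ 3 - 3/4 * s ^ 2 - 3/32 * s - 5/128) ^ 4 := by
  obtain ⟨y, hy, rfl⟩ : ∃ y, 0 ≤ y ∧ s = 1 + y := ⟨s - 1, by linarith, by ring⟩
  nlinarith [pow_nonneg hy 2, pow_nonneg hy 3, pow_nonneg hy 4, pow_nonneg hy 5,
    pow_nonneg hy 6, pow_nonneg hy 7, pow_nonneg hy 8, hy]

lemma key2 (s : ℝ) (hs : 1 ≤ s) :
    (s + 1) ^ 3 * s ^ 9 ≤ (s ^ 3 + 3/4 * s ^ 2 - 3/32 * s + 5/128) ^ 4 := by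
  obtain ⟨y, hy, rfl⟩ : ∃ y, 0 ≤ y ∧ s = 1 + y := ⟨s - 1, by linarith, by ring⟩
  nlinarith [pow_nonneg hy 2, pow_nonneg hy 3, pow_nonneg hy 4, pow_nonneg hy 5,
    pow_nonneg hy 6, pow_nonneg hy 7, pow_nonneg hy 8, hy]

lemma rpow34 (x : ℝ) (hx : 0 ≤ x) : x ^ ((3 : ℝ) / 4) = (x ^ ((1 : ℝ) / 4)) ^ 3 := by
  rw [← Real.rpow_natCast (x ^ ((1 : ℝ)/4)) 3, ← Real.rpow_mul hx]
  norm_num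

lemma final (A B X Y a b c : ℝ) (hA : 0 < A) (hB : 0 ≤ B) (hBA : B < A) (hc : 0 < c)
    (h1 : a + b + c ≤ X) (h2 : -a + b - c ≤ Y) : A * (a + b) + B * (b - a) < A * X + B * Y := by
  have f1 := mul_le_mul_of_nonneg_left h1 hA.le
  have f2 := mul_le_mul_of_nonneg_left h2 hB
  have f3 := mul_lt_mul_of_pos_right hBA hc
  nlinarith [f1, f2, f3]

set_option maxHeartbeats 1000000 in
theorem stmt_6 (n : ℕ) (hn : 1 ≤ n) :
    (n : ℝ) ^ ((1 : ℝ) / 2) * (2 * (n : ℝ) + 3) ^ 2 *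
        ((n : ℝ) ^ ((3 : ℝ) / 4) - ((n : ℝ) - 1) ^ ((3 : ℝ) / 4))
      + (2 * (n : ℝ) + 1) ^ ((3 : ℝ) / 2) * (((n : ℝ) + 2) * (2 * (n : ℝ) + 3)) ^ ((1 : ℝ) / 2) *
        ((n : ℝ) ^ ((3 : ℝ) / 4) - ((n : ℝ) + 1) ^ ((3 : ℝ) / 4))
      > (n : ℝ) ^ ((1 : ℝ) / 2) * (2 * (n : ℝ) + 3) ^ 2 *
          (3 / (4 * (n : ℝ) ^ ((1 : ℝ) / 4)) + 3 / (32 * (n : ℝ) ^ ((5 : ℝ) / 4)))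
        + (2 * (n : ℝ) + 1) ^ ((3 : ℝ) / 2) * (((n : ℝ) + 2) * (2 * (n : ℝ) + 3)) ^ ((1 : ℝ) / 2) *
          (3 / (32 * (n : ℝ) ^ ((5 : ℝ) / 4)) - 3 / (4 * (n : ℝ) ^ ((1 : ℝ) / 4))) := by
  have hN : (1 : ℝ) ≤ (n : ℝ) := by exact_mod_cast hn
  set N := (n : ℝ) with hNdef
  have hN0 : (0 : ℝ) ≤ N := by linarith
  have hN10 : (0 : ℝ) ≤ N - 1 := by linarith
  have hN20 : (0 : ℝ) ≤ N + 1 := by linarith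
  set t := N ^ ((1 : ℝ) / 4) with ht
  set u := (N - 1) ^ ((1 : ℝ) / 4) with hu
  set v := (N + 1) ^ ((1 : ℝ) / 4) with hv
  have ht1 : (1 : ℝ) ≤ t := Real.one_le_rpow hN (by norm_num)
  have ht0 : (0 : ℝ) < t := by linarith
  have hu0 : (0 : ℝ) ≤ u := Real.rpow_nonneg hN10 _
  have hv0 : (0 : ℝ) ≤ v := Real.rpow_nonneg hN20 _
  have ht4 : t ^ 4 = N := by
    rw [ht, ← Real.rpow_natCast (N ^ ((1:ℝ)/4)) 4, ← Real.rpow_mul hN0]; norm_num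
  have hu4 : u ^ 4 = N - 1 := by
    rw [hu, ← Real.rpow_natCast ((N-1) ^ ((1:ℝ)/4)) 4, ← Real.rpow_mul hN10]; norm_num
  have hv4 : v ^ 4 = N + 1 := by
    rw [hv, ← Real.rpow_natCast ((N+1) ^ ((1:ℝ)/4)) 4, ← Real.rpow_mul hN20]; norm_num
  have e34 : N ^ ((3 : ℝ) / 4) = t ^ 3 := rpow34 N hN0
  have eu3 : (N - 1) ^ ((3 : ℝ) / 4) = u ^ 3 := rpow34 (N - 1) hN10
  have ev3 : (N + 1) ^ ((3 : ℝ) / 4) = v ^ 3 := rpow34 (N + 1) hN20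
  have e12 : N ^ ((1 : ℝ) / 2) = t ^ 2 := by
    rw [ht, ← Real.rpow_natCast (N ^ ((1:ℝ)/4)) 2, ← Real.rpow_mul hN0]; norm_num
  have e54 : N ^ ((5 : ℝ) / 4) = t ^ 5 := by
    rw [ht, ← Real.rpow_natCast (N ^ ((1:ℝ)/4)) 5, ← Real.rpow_mul hN0]; norm_num
  set w := (2 * N + 1) ^ ((1 : ℝ) / 2) with hw
  set z := ((N + 2) * (2 * N + 3)) ^ ((1 : ℝ) / 2) with hz
  have h2N1 : (0 : ℝ) ≤ 2 * N + 1 := by linarith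
  have hprod : (0 : ℝ) ≤ (N + 2) * (2 * N + 3) := by nlinarith
  have hw0 : (0 : ℝ) ≤ w := Real.rpow_nonneg h2N1 _
  have hz0 : (0 : ℝ) ≤ z := Real.rpow_nonneg hprod _
  have ew3 : (2 * N + 1) ^ ((3 : ℝ) / 2) = w ^ 3 := by
    rw [hw, ← Real.rpow_natCast ((2*N+1) ^ ((1:ℝ)/2)) 3, ← Real.rpow_mul h2N1]; norm_num
  have hw2 : w ^ 2 = 2 * N + 1 := by
    rw [hw, ← Real.rpow_natCast ((2*N+1) ^ ((1:ℝ)/2)) 2, ← Real.rpow_mul h2N1]; norm_num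
  have hz2 : z ^ 2 = (N + 2) * (2 * N + 3) := by
    rw [hz, ← Real.rpow_natCast (((N+2)*(2*N+3)) ^ ((1:ℝ)/2)) 2, ← Real.rpow_mul hprod]; norm_num
  rw [e34, eu3, ev3, e12, e54, ew3]
  have ht9 : (0 : ℝ) < t ^ 9 := by positivity
  -- bound for u
  have hR1 : (0 : ℝ) ≤ N ^ 3 - 3/4 * N ^ 2 - 3/32 * N - 5/128 := by nlinarith
  have hu3 : u ^ 3 * t ^ 9 ≤ N ^ 3 - 3/4 * N ^ 2 - 3/32 * N - 5/128 := by
    refine le_of_pow_le_pow_left₀ (n := 4) (by norm_num) hR1 ?_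
    calc (u ^ 3 * t ^ 9) ^ 4 = (u ^ 4) ^ 3 * (t ^ 4) ^ 9 := by ring
      _ = (N - 1) ^ 3 * N ^ 9 := by rw [hu4, ht4]
      _ ≤ (N ^ 3 - 3/4 * N ^ 2 - 3/32 * N - 5/128) ^ 4 := key1 N hN
  have hR2 : (0 : ℝ) ≤ N ^ 3 + 3/4 * N ^ 2 - 3/32 * N + 5/128 := by nlinarith
  have hv3 : v ^ 3 * t ^ 9 ≤ N ^ 3 + 3/4 * N ^ 2 - 3/32 * N + 5/128 := by
    refine le_of_pow_le_pow_left₀ (n := 4) (by norm_num) hR2 ?_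
    calc (v ^ 3 * t ^ 9) ^ 4 = (v ^ 4) ^ 3 * (t ^ 4) ^ 9 := by ring
      _ = (N + 1) ^ 3 * N ^ 9 := by rw [hv4, ht4]
      _ ≤ (N ^ 3 + 3/4 * N ^ 2 - 3/32 * N + 5/128) ^ 4 := key2 N hN
  -- scalar bounds with divisions
  have H1 : u ^ 3 ≤ t ^ 3 - 3 / (4 * t) - 3 / (32 * t ^ 5) - 5 / (128 * t ^ 9) := by
    rw [← sub_nonneg]
    have expand : t ^ 3 - 3 / (4 * t) - 3 / (32 * t ^ 5) - 5 / (128 * t ^ 9) - u ^ 3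
        = ((t ^ 4) ^ 3 - 3/4 * (t ^ 4) ^ 2 - 3/32 * (t ^ 4) - 5/128 - u ^ 3 * t ^ 9) / t ^ 9 := by
      field_simp
    rw [expand, ht4]
    exact div_nonneg (by linarith) ht9.le
  have H2 : v ^ 3 ≤ t ^ 3 + 3 / (4 * t) - 3 / (32 * t ^ 5) + 5 / (128 * t ^ 9) := by
    rw [← sub_nonneg]
    have expand : t ^ 3 + 3 / (4 * t) - 3 / (32 * t ^ 5) + 5 / (128 * t ^ 9) - v ^ 3
        = ((t ^ 4) ^ 3 + 3/4 * (t ^ 4) ^ 2 - 3/32 * (t ^ 4) + 5/128 - v ^ 3 * t ^ 9) / t ^ 9 := by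
      field_simp
    rw [expand, ht4]
    exact div_nonneg (by linarith) ht9.le
  -- compare coefficients A > B
  have hA0 : (0 : ℝ) < t ^ 2 * (2 * N + 3) ^ 2 := by positivity
  have hB0 : (0 : ℝ) ≤ w ^ 3 * z := by positivity
  have hBA : w ^ 3 * z < t ^ 2 * (2 * N + 3) ^ 2 := by
    refine lt_of_pow_lt_pow_left₀ 2 hA0.le ?_
    have l : (w ^ 3 * z) ^ 2 = (2 * N + 1) ^ 3 * ((N + 2) * (2 * N + 3)) := by
      calc (w ^ 3 * z) ^ 2 = (w ^ 2) ^ 3 * z ^ 2 := by ring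
        _ = (2 * N + 1) ^ 3 * ((N + 2) * (2 * N + 3)) := by rw [hw2, hz2]
    have r : (t ^ 2 * (2 * N + 3) ^ 2) ^ 2 = t ^ 4 * (2 * N + 3) ^ 4 := by ring
    rw [l, r, ht4]
    nlinarith
  -- finish
  have hc : (0 : ℝ) < 5 / (128 * t ^ 9) := by positivity
  have h1' : 3 / (4 * t) + 3 / (32 * t ^ 5) + 5 / (128 * t ^ 9) ≤ t ^ 3 - u ^ 3 := by linarith
  have h2' : -(3 / (4 * t)) + 3 / (32 * t ^ 5) - 5 / (128 * t ^ 9) ≤ t ^ 3 - v ^ 3 := by linarith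
  exact final _ _ _ _ _ _ _ hA0 hB0 hBA hc h1' h2'
end

section
/- For every positive integer n, the improved Copson weight Ṽ_n = √(S̃_n)/n^2 + √(S̃_{n+1})/(n+1)^2 - (√(S̃_n)/n^2)(1 - 1/n)^{3/4} - (√(S̃_{n+1})/(n+1)^2)(1 + 1/n)^{3/4} satisfies Ṽ_n > (1/16) n^2 / S̃_n^{3/2}, where S̃_n = n(n+1)(2n+1)/6. -/
theorem rpow34_pow4 (y : ℝ) (hy : 0 ≤ y) : (y ^ ((3:ℝ)/4)) ^ 4 = y ^ 3 := by
  rw [← Real.rpow_natCast (y ^ ((3:ℝ)/4)) 4, ← Real.rpow_mul hy]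
  norm_num

theorem lemA (x : ℝ) (hx : 0 ≤ x) (hx1 : x ≤ 1) :
    (1 - x) ^ ((3:ℝ)/4) ≤ 1 - 3/4*x - 3/32*x^2 := by
  have h1 : (0:ℝ) ≤ 1 - x := by linarith
  have h2 : (0:ℝ) ≤ 1 - 3/4*x - 3/32*x^2 := by nlinarith
  have key : ((1 - x) ^ ((3:ℝ)/4)) ^ 4 ≤ (1 - 3/4*x - 3/32*x^2) ^ 4 := by
    rw [rpow34_pow4 _ h1]
    nlinarith [sq_nonneg x, sq_nonneg (1-x), mul_nonneg hx hx, sq_nonneg (x*(1-x)), mul_nonneg (mul_nonneg hx hx) hx, mul_nonneg (sub_nonneg.2 hx1) hx]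
  exact le_of_pow_le_pow_left₀ (by norm_num) h2 key

theorem lemB (x : ℝ) (hx : 0 ≤ x) (hx1 : x ≤ 1) :
    (1 + x) ^ ((3:ℝ)/4) ≤ 1 + 3/4*x - 3/32*x^2 + 7/128*x^3 := by
  have h1 : (0:ℝ) ≤ 1 + x := by linarith
  have h2 : (0:ℝ) ≤ 1 + 3/4*x - 3/32*x^2 + 7/128*x^3 := by nlinarith
  have key : ((1 + x) ^ ((3:ℝ)/4)) ^ 4 ≤ (1 + 3/4*x - 3/32*x^2 + 7/128*x^3) ^ 4 := by
    rw [rpow34_pow4 _ h1]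
    have e1 : (0:ℝ) ≤ x^6*(1-x) := mul_nonneg (pow_nonneg hx 6) (by linarith)
    have e2 : (0:ℝ) ≤ x^8*(1-x) := mul_nonneg (pow_nonneg hx 8) (by linarith)
    have e3 : (0:ℝ) ≤ x^10*(1-x) := mul_nonneg (pow_nonneg hx 10) (by linarith)
    have e4 : (0:ℝ) ≤ x^3 := pow_nonneg hx 3
    have e5 : (0:ℝ) ≤ x^4 := pow_nonneg hx 4
    have e6 : (0:ℝ) ≤ x^5 := pow_nonneg hx 5
    nlinarith [e1, e2, e3, e4, e5, e6, sq_nonneg x]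
  exact le_of_pow_le_pow_left₀ (by norm_num) h2 key

set_option maxHeartbeats 1000000 in
theorem stmt_8 (S : ℕ → ℝ) (hS : ∀ n, S n = (n : ℝ) * ((n : ℝ) + 1) * (2 * (n : ℝ) + 1) / 6)
    (n : ℕ) (hn : 1 ≤ n) :
    Real.sqrt (S n) / (n : ℝ) ^ 2 + Real.sqrt (S (n + 1)) / ((n : ℝ) + 1) ^ 2
      - (Real.sqrt (S n) / (n : ℝ) ^ 2) * (1 - 1 / (n : ℝ)) ^ ((3 : ℝ) / 4)
      - (Real.sqrt (S (n + 1)) / ((n : ℝ) + 1) ^ 2) * (1 + 1 / (n : ℝ)) ^ ((3 : ℝ) / 4)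
      > (1 / 16) * (n : ℝ) ^ 2 / (S n) ^ ((3 : ℝ) / 2) := by
  have hn1 : (1:ℝ) ≤ (n:ℝ) := by exact_mod_cast hn
  have hm : (0:ℝ) < (n:ℝ) := by linarith
  set m := (n:ℝ) with hmdef
  have hmne : m ≠ 0 := ne_of_gt hm
  have hm1ne : m + 1 ≠ 0 := by positivity
  have hSn : S n = m*(m+1)*(2*m+1)/6 := by rw [hS]
  have hSn1 : S (n+1) = (m+1)*(m+2)*(2*m+3)/6 := by rw [hS]; push_cast; ring
  have hSpos : 0 < S n := by
    rw [hSn]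
    have := mul_pos (mul_pos hm (by linarith : (0:ℝ) < m+1)) (by linarith : (0:ℝ) < 2*m+1)
    linarith
  have hS1pos : 0 < S (n+1) := by
    rw [hSn1]
    have := mul_pos (mul_pos (by linarith : (0:ℝ) < m+1) (by linarith : (0:ℝ) < m+2)) (by linarith : (0:ℝ) < 2*m+3)
    linarith
  set s := Real.sqrt (S n) with hsdef
  set t := Real.sqrt (S (n+1)) with htdef
  have hs : 0 < s := Real.sqrt_pos.2 hSpos
  have ht : 0 < t := Real.sqrt_pos.2 hS1pos
  have hs2 : s^2 = S n := Real.sq_sqrt hSpos.le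
  have ht2 : t^2 = S (n+1) := Real.sq_sqrt hS1pos.le
  have hrpow : (S n)^((3:ℝ)/2) = S n * s := by
    rw [show (3:ℝ)/2 = 1 + 1/2 by norm_num, Real.rpow_add hSpos, Real.rpow_one,
      hsdef, Real.sqrt_eq_rpow]
  set x := 1/m with hxdef
  have hx0 : 0 ≤ x := by positivity
  have hx1 : x ≤ 1 := by rw [hxdef, div_le_one hm]; exact hn1
  have hA := lemA x hx0 hx1
  have hB := lemB x hx0 hx1
  have ha0 : 0 ≤ s/m^2 := by positivity
  have hb0 : 0 ≤ t/(m+1)^2 := by positivity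
  have hAm : s/m^2 * (1-x)^((3:ℝ)/4) ≤ s/m^2 * (1-3/4*x-3/32*x^2) :=
    mul_le_mul_of_nonneg_left hA ha0
  have hBm : t/(m+1)^2 * (1+x)^((3:ℝ)/4) ≤ t/(m+1)^2 * (1+3/4*x-3/32*x^2+7/128*x^3) :=
    mul_le_mul_of_nonneg_left hB hb0
  have key : 1/16*m^2/((S n)^((3:ℝ)/2)) <
      s/m^2*(3/4*x+3/32*x^2) - t/(m+1)^2*(3/4*x-3/32*x^2+7/128*x^3) := by
    rw [hrpow, div_lt_iff₀ (by positivity)]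
    have hts : t*s ≤ (8*m^3+12*m^2-3*m+2)/(8*m^3) * S n := by
      have hU0 : 0 ≤ (8*m^3+12*m^2-3*m+2)/(8*m^3) := by
        apply div_nonneg _ (by positivity); nlinarith
      have h1 : t ≤ (8*m^3+12*m^2-3*m+2)/(8*m^3) * s := by
        have hs1 : S (n+1) ≤ ((8*m^3+12*m^2-3*m+2)/(8*m^3) * s)^2 := by
          rw [mul_pow, hs2, hSn, hSn1, div_pow, div_mul_eq_mul_div,
            le_div_iff₀ (by positivity)]
          nlinarith [hn1, hm, mul_pos hm hm, pow_pos hm 3, pow_pos hm 4, pow_pos hm 5, pow_pos hm 6]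
        calc t ≤ Real.sqrt (((8*m^3+12*m^2-3*m+2)/(8*m^3) * s)^2) := Real.sqrt_le_sqrt hs1
          _ = (8*m^3+12*m^2-3*m+2)/(8*m^3) * s := Real.sqrt_sq (mul_nonneg hU0 hs.le)
      calc t*s ≤ ((8*m^3+12*m^2-3*m+2)/(8*m^3) * s)*s := mul_le_mul_of_nonneg_right h1 hs.le
        _ = (8*m^3+12*m^2-3*m+2)/(8*m^3) * S n := by rw [mul_assoc, ← sq, hs2]
    have hexp : (s/m^2*(3/4*x+3/32*x^2) - t/(m+1)^2*(3/4*x-3/32*x^2+7/128*x^3)) * (S n * s)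
        = (S n)^2*(3/4*x+3/32*x^2)/m^2 - (t*s)*(S n*(3/4*x-3/32*x^2+7/128*x^3)/(m+1)^2) := by
      rw [← hs2]; field_simp
    rw [hexp]
    have hc2 : 0 ≤ 3/4*x-3/32*x^2+7/128*x^3 := by nlinarith
    have hcoef : 0 ≤ S n*(3/4*x-3/32*x^2+7/128*x^3)/(m+1)^2 := by
      apply div_nonneg (mul_nonneg hSpos.le hc2) (by positivity)
    have hmono : (t*s)*(S n*(3/4*x-3/32*x^2+7/128*x^3)/(m+1)^2)
        ≤ ((8*m^3+12*m^2-3*m+2)/(8*m^3) * S n)*(S n*(3/4*x-3/32*x^2+7/128*x^3)/(m+1)^2) :=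
      mul_le_mul_of_nonneg_right hts hcoef
    have hrat : 1/16*m^2 < (S n)^2*(3/4*x+3/32*x^2)/m^2
        - ((8*m^3+12*m^2-3*m+2)/(8*m^3) * S n)*(S n*(3/4*x-3/32*x^2+7/128*x^3)/(m+1)^2) := by
      rw [hxdef, hSn]
      rw [← sub_pos]
      have hid : (m * (m + 1) * (2 * m + 1) / 6) ^ 2 * (3 / 4 * (1 / m) + 3 / 32 * (1 / m) ^ 2) / m ^ 2 -
          (8 * m ^ 3 + 12 * m ^ 2 - 3 * m + 2) / (8 * m ^ 3) * (m * (m + 1) * (2 * m + 1) / 6) *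
            (m * (m + 1) * (2 * m + 1) / 6 * (3 / 4 * (1 / m) - 3 / 32 * (1 / m) ^ 2 + 7 / 128 * (1 / m) ^ 3) / (m + 1) ^ 2)
          - 1 / 16 * m ^ 2
          = (7648*m^9+20352*m^8+18412*m^7+6268*m^6+457*m^5-128*m^4-39*m^3-14*m^2) / (36864 * m^6 * (m+1)^2) := by
        field_simp
        ring
      rw [hid]
      apply div_pos _ (by positivity)
      nlinarith [pow_pos hm 2, pow_pos hm 3, pow_pos hm 4, pow_pos hm 5, mul_le_mul_of_nonneg_left hn1 (le_of_lt (pow_pos hm 4)), mul_le_mul_of_nonneg_left hn1 (le_of_lt (pow_pos hm 3)), mul_le_mul_of_nonneg_left hn1 (le_of_lt (pow_pos hm 2)), pow_le_pow_left₀ (by linarith : (0:ℝ) ≤ 1) hn1 5]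
    linarith
  linarith [hAm, hBm, key]
end

section
/- For every finitely supported complex sequence A with A_0 = 0, ∑_{n=1}^∞ (1/16)(n^3 / Ŝ_n^{3/2}) |A_n|^2 < ∑_{n=1}^∞ V̂_n |A_n|^2 ≤ ∑_{n=1}^∞ √(Ŝ_n) |A_n - A_{n-1}|^2 / n^3, provided A is not identically zero, where Ŝ_n = (n(n+1)/2)^2 and V̂_n = √(Ŝ_n)/n^3 + √(Ŝ_{n+1})/(n+1)^3 - (√(Ŝ_n)/n^3)(1 - 1/n) - (√(Ŝ_{n+1})/(n+1)^3)(1 + 1/n). -/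
set_option maxHeartbeats 1000000 in
theorem stmt_11 (S : ℕ → ℝ) (hS : ∀ n, S n = ((n : ℝ) * ((n : ℝ) + 1) / 2) ^ 2)
    (V : ℕ → ℝ)
    (hV : ∀ n, V n = Real.sqrt (S n) / (n : ℝ) ^ 3 + Real.sqrt (S (n + 1)) / ((n : ℝ) + 1) ^ 3
      - (Real.sqrt (S n) / (n : ℝ) ^ 3) * (1 - 1 / (n : ℝ))
      - (Real.sqrt (S (n + 1)) / ((n : ℝ) + 1) ^ 3) * (1 + 1 / (n : ℝ)))
    (A : ℕ → ℂ) (hsupp : (Function.support A).Finite) (h0 : A 0 = 0) (hne : A ≠ 0) :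
    (∑' n : ℕ, (1 / 16) * (((n : ℝ) + 1) ^ 3 / (S (n + 1)) ^ ((3 : ℝ) / 2)) * ‖A (n + 1)‖ ^ 2) <
      (∑' n : ℕ, V (n + 1) * ‖A (n + 1)‖ ^ 2) ∧
    (∑' n : ℕ, V (n + 1) * ‖A (n + 1)‖ ^ 2) ≤
      ∑' n : ℕ, Real.sqrt (S (n + 1)) * ‖A (n + 1) - A n‖ ^ 2 / ((n : ℝ) + 1) ^ 3 := by
  have hsqrt : ∀ k : ℕ, Real.sqrt (S k) = (k : ℝ) * ((k:ℝ)+1) / 2 := fun k => by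
    rw [hS]; exact Real.sqrt_sq (by positivity)
  have hrpow : ∀ k : ℕ, (S k) ^ ((3:ℝ)/2) = ((k:ℝ) * ((k:ℝ)+1) / 2) ^ 3 := fun k => by
    rw [hS, ← Real.rpow_natCast ((k:ℝ)*((k:ℝ)+1)/2) 2, ← Real.rpow_mul (by positivity),
      ← Real.rpow_natCast ((k:ℝ)*((k:ℝ)+1)/2) 3]
    norm_num
  -- the strict coefficient inequality
  have coeff : ∀ i : ℕ, (1/16 : ℝ) * (((i:ℝ) + 1) ^ 3 / (((i:ℝ) + 1) * ((i:ℝ) + 1 + 1) / 2) ^ 3) <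
      ((i:ℝ) + 1) * ((i:ℝ) + 1 + 1) / 2 / ((i:ℝ) + 1) ^ 3
        + ((i:ℝ) + 2) * ((i:ℝ) + 2 + 1) / 2 / ((i:ℝ) + 1 + 1) ^ 3
        - ((i:ℝ) + 1) * ((i:ℝ) + 1 + 1) / 2 / ((i:ℝ) + 1) ^ 3 * (1 - 1 / ((i:ℝ) + 1))
        - ((i:ℝ) + 2) * ((i:ℝ) + 2 + 1) / 2 / ((i:ℝ) + 1 + 1) ^ 3 * (1 + 1 / ((i:ℝ) + 1)) := by
    intro i
    set c : ℝ := (i : ℝ) with hc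
    have hc0 : (0:ℝ) ≤ c := Nat.cast_nonneg i
    have h1 : (0:ℝ) < c + 1 := by linarith
    have h2 : (0:ℝ) < c + 2 := by linarith
    have e1 : (1/16 : ℝ) * ((c + 1) ^ 3 / ((c + 1) * (c + 1 + 1) / 2) ^ 3)
        = 1 / (2 * (c + 2) ^ 3) := by
      field_simp
      ring
    have e2 : (c + 1) * (c + 1 + 1) / 2 / (c + 1) ^ 3
        + (c + 2) * (c + 2 + 1) / 2 / (c + 1 + 1) ^ 3
        - (c + 1) * (c + 1 + 1) / 2 / (c + 1) ^ 3 * (1 - 1 / (c + 1))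
        - (c + 2) * (c + 2 + 1) / 2 / (c + 1 + 1) ^ 3 * (1 + 1 / (c + 1))
        = ((c+1)^2 + 3*(c+1) + 1) / (2 * (c+1) ^ 3 * (c+2) ^ 2) := by
      field_simp
      ring
    rw [e1, e2, div_lt_div_iff₀ (by positivity) (by positivity)]
    nlinarith [sq_nonneg c, pow_pos h2 2]
  obtain ⟨M, hM⟩ := hsupp.bddAbove
  set N := M + 1 with hNdef
  have hzero : ∀ n, N ≤ n → A n = 0 := by
    intro n hn
    by_contra h
    have : n ≤ M := hM h
    omega
  have key : ∀ (f : ℕ → ℝ), (∀ n, N ≤ n → f n = 0) →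
      ∑' n, f n = ∑ n ∈ Finset.range N, f n := by
    intro f hf
    apply tsum_eq_sum
    intro b hb
    exact hf b (by simpa [Finset.mem_range, Nat.not_lt] using hb)
  rw [key _ (fun n hn => by rw [hzero (n+1) (by omega)]; simp),
      key (fun n => V (n+1) * ‖A (n+1)‖^2) (fun n hn => by
        have := hzero (n+1) (by omega); simp [this]),
      key _ (fun n hn => by rw [hzero (n+1) (by omega), hzero n hn]; simp)]
  constructor
  · apply Finset.sum_lt_sum
    · intro i _
      have hcoef : (1/16:ℝ) * (((i:ℝ)+1)^3 / (S (i+1)) ^ ((3:ℝ)/2)) ≤ V (i+1) := by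
        rw [hrpow (i+1), hV (i+1), hsqrt (i+1), hsqrt (i+2)]
        push_cast
        exact (coeff i).le
      exact mul_le_mul_of_nonneg_right hcoef (sq_nonneg _)
    · obtain ⟨n, hn⟩ := Function.ne_iff.mp hne
      obtain ⟨k, rfl⟩ : ∃ k, n = k + 1 := by
        cases n with
        | zero => exact absurd h0 hn
        | succ k => exact ⟨k, rfl⟩
      refine ⟨k, Finset.mem_range.mpr ?_, ?_⟩
      · by_contra h
        exact hn (hzero (k+1) (by omega))
      · have hcoef : (1/16:ℝ) * (((k:ℝ)+1)^3 / (S (k+1)) ^ ((3:ℝ)/2)) < V (k+1) := by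
          rw [hrpow (k+1), hV (k+1), hsqrt (k+1), hsqrt (k+2)]
          push_cast
          exact coeff k
        exact mul_lt_mul_of_pos_right hcoef (pow_pos (norm_pos_iff.mpr hn) 2)
  · set g : ℕ → ℝ := fun k => (Real.sqrt (S (k+1)) / ((k:ℝ)+1)^3 / (k:ℝ)) * ‖A k‖^2 with hg
    have tel : ∑ n ∈ Finset.range N, (g (n+1) - g n) = g N - g 0 := Finset.sum_range_sub g N
    have hg0 : g 0 = 0 := by simp [hg, h0]
    have hgN : 0 ≤ g N := by
      apply mul_nonneg _ (sq_nonneg _)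
      apply div_nonneg (div_nonneg (Real.sqrt_nonneg _) (by positivity)) (by positivity)
    have hpt : ∀ n ∈ Finset.range N, V (n+1) * ‖A (n+1)‖^2 + (g (n+1) - g n) ≤
        Real.sqrt (S (n+1)) * ‖A (n+1) - A n‖^2 / ((n:ℝ)+1)^3 := by
      intro n _
      cases n with
      | zero =>
        rw [hV 1, hsqrt 1, hsqrt 2, hg]
        simp only [h0, sub_zero]
        push_cast
        rw [hsqrt 1, hsqrt 2]
        norm_num
        linarith
      | succ k =>
        have e1 : k+1+1 = k+2 := rfl
        have e2 : k+1+1+1 = k+3 := rfl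
        simp only [e1, e2, hg]
        rw [hV (k+2), hsqrt (k+2), hsqrt (k+3)]
        push_cast
        set c : ℝ := (k : ℝ) with hcdef
        have hc0 : (0:ℝ) ≤ c := Nat.cast_nonneg k
        set x : ℝ := ‖A (k+2)‖ with hx
        set y : ℝ := ‖A (k+1)‖ with hy
        set D : ℝ := ‖A (k+2) - A (k+1)‖ with hD
        have h1 : (0:ℝ) < c+1 := by linarith
        have h2 : (0:ℝ) < c+2 := by linarith
        have h3 : (0:ℝ) < c+3 := by linarith
        have habs : |x - y| ≤ D := abs_norm_sub_norm_le (A (k+2)) (A (k+1))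
        have hD2 : (x-y)^2 ≤ D^2 := by
          have h' : |x-y|^2 ≤ D^2 := pow_le_pow_left₀ (abs_nonneg _) habs 2
          simpa [sq_abs] using h'
        have diff : (c+2)*(c+2+1)/2 * (x-y)^2 / (c+1+1)^3
            - (((c+2)*(c+2+1)/2/(c+2)^3 + (c+3)*(c+3+1)/2/(c+2+1)^3
              - (c+2)*(c+2+1)/2/(c+2)^3 * (1 - 1/(c+2))
              - (c+3)*(c+3+1)/2/(c+2+1)^3 * (1 + 1/(c+2))) * x^2
            + ((c+3)*(c+3+1)/2/(c+2+1)^3/(c+2) * x^2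
            - (c+2)*(c+2+1)/2/(c+1+1)^3/(c+1) * y^2))
            = (c+3) * ((c+1)*x - (c+2)*y)^2 / (2*(c+2)^3*(c+1)) := by
          have hne2 : (c+2) ≠ 0 := ne_of_gt h2
          have hne3 : (c+3) ≠ 0 := ne_of_gt h3
          field_simp
          ring
        have hpos : (0:ℝ) ≤ (c+3) * ((c+1)*x - (c+2)*y)^2 / (2*(c+2)^3*(c+1)) := by positivity
        have hmono : (c+2)*(c+2+1)/2 * (x-y)^2 / (c+1+1)^3 ≤ (c+2)*(c+2+1)/2 * D^2 / (c+1+1)^3 := by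
          apply div_le_div_of_nonneg_right _ (by positivity)
          exact mul_le_mul_of_nonneg_left hD2 (by positivity)
        linarith
    have hsum := Finset.sum_le_sum hpt
    rw [Finset.sum_add_distrib, tel, hg0] at hsum
    linarith
end

section
/- The identity ∑_{n=1}^∞ √(Ŝ_n) |A_n - A_{n-1}|^2 / n^3 = ∑_{n=1}^∞ V̂_n |A_n|^2 + ∑_{n=1}^∞ |√(n/(n+1)) A_{n+1} - √((n+1)/n) A_n|^2 √(Ŝ_{n+1})/(n+1)^3 holds for every finitely supported complex sequence A with A_0 = 0, where Ŝ_n = (n(n+1)/2)^2 and V̂_n is as in the improved Copson inequality with q_n = n^3. -/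
open Complex in
lemma alg_key (t : ℝ) (ht : 0 ≤ t) (x y : ℂ) :
    (t + 2) * ((t + 2) + 1) / 2 * ‖y - x‖ ^ 2 / (t + 2) ^ 3 =
      ((t + 1) * ((t + 1) + 1) / 2 / (t + 1) ^ 3
        + (t + 2) * ((t + 2) + 1) / 2 / (t + 2) ^ 3
        - ((t + 1) * ((t + 1) + 1) / 2 / (t + 1) ^ 3) * (1 - 1 / (t + 1))
        - ((t + 2) * ((t + 2) + 1) / 2 / (t + 2) ^ 3) * (1 + 1 / (t + 1))) * ‖x‖ ^ 2
      + ‖(Real.sqrt ((t + 1) / (t + 2)) : ℂ) * y - (Real.sqrt ((t + 2) / (t + 1)) : ℂ) * x‖ ^ 2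
          * ((t + 2) * ((t + 2) + 1) / 2 / (t + 2) ^ 3)
      + (t + 3) / (2 * (t + 2) ^ 3) * ‖y‖ ^ 2
      - (t + 2) / (2 * (t + 1) ^ 3) * ‖x‖ ^ 2 := by
  have h1 : (0:ℝ) < t + 1 := by linarith
  have h2 : (0:ℝ) < t + 2 := by linarith
  set p := Real.sqrt ((t + 1) / (t + 2)) with hp
  set q := Real.sqrt ((t + 2) / (t + 1)) with hq
  have hp2 : p ^ 2 = (t + 1) / (t + 2) := Real.sq_sqrt (by positivity)
  have hq2 : q ^ 2 = (t + 2) / (t + 1) := Real.sq_sqrt (by positivity)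
  have hpq : p * q = 1 := by
    rw [hp, hq, ← Real.sqrt_mul (by positivity)]
    rw [show (t+1)/(t+2) * ((t+2)/(t+1)) = 1 by field_simp]
    exact Real.sqrt_one
  have e1 : ‖y - x‖ ^ 2 = normSq y + normSq x - 2 * (y * (starRingEnd ℂ) x).re := by
    rw [Complex.sq_norm, Complex.normSq_sub]
  have e2 : ‖(p:ℂ) * y - (q:ℂ) * x‖ ^ 2
      = p ^ 2 * normSq y + q ^ 2 * normSq x - 2 * (p * q) * (y * (starRingEnd ℂ) x).re := by
    rw [Complex.sq_norm, Complex.normSq_sub]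
    simp only [map_mul, Complex.normSq_mul, Complex.normSq_ofReal, Complex.conj_ofReal]
    have : ((p:ℂ) * y * ((q:ℂ) * (starRingEnd ℂ) x)).re = p * q * (y * (starRingEnd ℂ) x).re := by
      rw [show (p:ℂ) * y * ((q:ℂ) * (starRingEnd ℂ) x) = ((p*q : ℝ):ℂ) * (y * (starRingEnd ℂ) x) by
        push_cast; ring, Complex.re_ofReal_mul]
    rw [this]; ring
  have e3 : ‖x‖ ^ 2 = normSq x := by rw [Complex.sq_norm]
  have e4 : ‖y‖ ^ 2 = normSq y := by rw [Complex.sq_norm]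
  rw [e1, e2, e3, e4, hp2, hq2, hpq]
  field_simp
  ring

lemma tele (A : ℕ → ℂ) (h0 : A 0 = 0) : ∀ M : ℕ,
    ∑ n ∈ Finset.range (M + 1),
        ((n:ℝ) + 1) * (((n:ℝ) + 1) + 1) / 2 * ‖A (n + 1) - A n‖ ^ 2 / ((n:ℝ) + 1) ^ 3
    = (∑ n ∈ Finset.range M,
        (((n:ℝ) + 1) * (((n:ℝ) + 1) + 1) / 2 / ((n:ℝ) + 1) ^ 3
          + ((n:ℝ) + 2) * (((n:ℝ) + 2) + 1) / 2 / ((n:ℝ) + 2) ^ 3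
          - (((n:ℝ) + 1) * (((n:ℝ) + 1) + 1) / 2 / ((n:ℝ) + 1) ^ 3) * (1 - 1 / ((n:ℝ) + 1))
          - (((n:ℝ) + 2) * (((n:ℝ) + 2) + 1) / 2 / ((n:ℝ) + 2) ^ 3) * (1 + 1 / ((n:ℝ) + 1)))
          * ‖A (n + 1)‖ ^ 2)
      + (∑ n ∈ Finset.range M,
        ‖(Real.sqrt (((n:ℝ) + 1) / ((n:ℝ) + 2)) : ℂ) * A (n + 2)
            - (Real.sqrt (((n:ℝ) + 2) / ((n:ℝ) + 1)) : ℂ) * A (n + 1)‖ ^ 2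
          * (((n:ℝ) + 2) * (((n:ℝ) + 2) + 1) / 2 / ((n:ℝ) + 2) ^ 3))
      + ((M:ℝ) + 2) / (2 * ((M:ℝ) + 1) ^ 3) * ‖A (M + 1)‖ ^ 2 := by
  intro M
  induction M with
  | zero => simp [h0]
  | succ M ih =>
      rw [Finset.sum_range_succ, ih, Finset.sum_range_succ (n := M),
        Finset.sum_range_succ (n := M)]
      have key := alg_key (M:ℝ) (Nat.cast_nonneg M) (A (M + 1)) (A (M + 2))
      simp only [show M + 1 + 1 = M + 2 from rfl]
      push_cast
      push_cast at key
      linear_combination key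

theorem stmt_12 (S : ℕ → ℝ) (hS : ∀ n, S n = ((n : ℝ) * ((n : ℝ) + 1) / 2) ^ 2)
    (V : ℕ → ℝ)
    (hV : ∀ n, V n = Real.sqrt (S n) / (n : ℝ) ^ 3 + Real.sqrt (S (n + 1)) / ((n : ℝ) + 1) ^ 3
      - (Real.sqrt (S n) / (n : ℝ) ^ 3) * (1 - 1 / (n : ℝ))
      - (Real.sqrt (S (n + 1)) / ((n : ℝ) + 1) ^ 3) * (1 + 1 / (n : ℝ)))
    (A : ℕ → ℂ) (hsupp : (Function.support A).Finite) (h0 : A 0 = 0) :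
    (∑' n : ℕ, Real.sqrt (S (n + 1)) * ‖A (n + 1) - A n‖ ^ 2 / ((n : ℝ) + 1) ^ 3) =
      (∑' n : ℕ, V (n + 1) * ‖A (n + 1)‖ ^ 2) +
        ∑' n : ℕ,
          ‖(Real.sqrt (((n : ℝ) + 1) / ((n : ℝ) + 2)) : ℂ) * A (n + 2)
              - (Real.sqrt (((n : ℝ) + 2) / ((n : ℝ) + 1)) : ℂ) * A (n + 1)‖ ^ 2 *
            (Real.sqrt (S (n + 2)) / ((n : ℝ) + 2) ^ 3) := by
  obtain ⟨N, hN⟩ : ∃ N : ℕ, ∀ m, N < m → A m = 0 := by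
    obtain ⟨N, hN⟩ := hsupp.bddAbove
    exact ⟨N, fun m hm => by
      by_contra h
      exact absurd (hN (Function.mem_support.mpr h)) (not_le.mpr hm)⟩
  have hsqrt : ∀ n : ℕ, Real.sqrt (S n) = (n : ℝ) * ((n : ℝ) + 1) / 2 := by
    intro n; rw [hS]; exact Real.sqrt_sq (by positivity)
  have e1 : (∑' n : ℕ, Real.sqrt (S (n + 1)) * ‖A (n + 1) - A n‖ ^ 2 / ((n : ℝ) + 1) ^ 3)
      = ∑ n ∈ Finset.range (N + 2),
          Real.sqrt (S (n + 1)) * ‖A (n + 1) - A n‖ ^ 2 / ((n : ℝ) + 1) ^ 3 := by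
    apply tsum_eq_sum
    intro n hn
    simp only [Finset.mem_range, not_lt] at hn
    rw [hN (n + 1) (by omega), hN n (by omega)]
    simp
  have e2 : (∑' n : ℕ, V (n + 1) * ‖A (n + 1)‖ ^ 2)
      = ∑ n ∈ Finset.range (N + 1), V (n + 1) * ‖A (n + 1)‖ ^ 2 := by
    apply tsum_eq_sum
    intro n hn
    simp only [Finset.mem_range, not_lt] at hn
    rw [hN (n + 1) (by omega)]
    simp
  have e3 : (∑' n : ℕ,
        ‖(Real.sqrt (((n : ℝ) + 1) / ((n : ℝ) + 2)) : ℂ) * A (n + 2)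
            - (Real.sqrt (((n : ℝ) + 2) / ((n : ℝ) + 1)) : ℂ) * A (n + 1)‖ ^ 2 *
          (Real.sqrt (S (n + 2)) / ((n : ℝ) + 2) ^ 3))
      = ∑ n ∈ Finset.range (N + 1),
        ‖(Real.sqrt (((n : ℝ) + 1) / ((n : ℝ) + 2)) : ℂ) * A (n + 2)
            - (Real.sqrt (((n : ℝ) + 2) / ((n : ℝ) + 1)) : ℂ) * A (n + 1)‖ ^ 2 *
          (Real.sqrt (S (n + 2)) / ((n : ℝ) + 2) ^ 3) := by
    apply tsum_eq_sum
    intro n hn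
    simp only [Finset.mem_range, not_lt] at hn
    rw [hN (n + 1) (by omega), hN (n + 2) (by omega)]
    simp
  rw [e1, e2, e3]
  have c1 : ∑ n ∈ Finset.range (N + 2),
        Real.sqrt (S (n + 1)) * ‖A (n + 1) - A n‖ ^ 2 / ((n : ℝ) + 1) ^ 3
      = ∑ n ∈ Finset.range (N + 2),
        ((n:ℝ) + 1) * (((n:ℝ) + 1) + 1) / 2 * ‖A (n + 1) - A n‖ ^ 2 / ((n:ℝ) + 1) ^ 3 := by
    refine Finset.sum_congr rfl fun n _ => ?_
    rw [hsqrt]; push_cast; ring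
  have c2 : ∑ n ∈ Finset.range (N + 1), V (n + 1) * ‖A (n + 1)‖ ^ 2
      = ∑ n ∈ Finset.range (N + 1),
        (((n:ℝ) + 1) * (((n:ℝ) + 1) + 1) / 2 / ((n:ℝ) + 1) ^ 3
          + ((n:ℝ) + 2) * (((n:ℝ) + 2) + 1) / 2 / ((n:ℝ) + 2) ^ 3
          - (((n:ℝ) + 1) * (((n:ℝ) + 1) + 1) / 2 / ((n:ℝ) + 1) ^ 3) * (1 - 1 / ((n:ℝ) + 1))
          - (((n:ℝ) + 2) * (((n:ℝ) + 2) + 1) / 2 / ((n:ℝ) + 2) ^ 3) * (1 + 1 / ((n:ℝ) + 1)))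
          * ‖A (n + 1)‖ ^ 2 := by
    refine Finset.sum_congr rfl fun n _ => ?_
    rw [hV, hsqrt, hsqrt]; push_cast; ring
  have c3 : ∑ n ∈ Finset.range (N + 1),
        ‖(Real.sqrt (((n : ℝ) + 1) / ((n : ℝ) + 2)) : ℂ) * A (n + 2)
            - (Real.sqrt (((n : ℝ) + 2) / ((n : ℝ) + 1)) : ℂ) * A (n + 1)‖ ^ 2 *
          (Real.sqrt (S (n + 2)) / ((n : ℝ) + 2) ^ 3)
      = ∑ n ∈ Finset.range (N + 1),
        ‖(Real.sqrt (((n:ℝ) + 1) / ((n:ℝ) + 2)) : ℂ) * A (n + 2)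
            - (Real.sqrt (((n:ℝ) + 2) / ((n:ℝ) + 1)) : ℂ) * A (n + 1)‖ ^ 2
          * (((n:ℝ) + 2) * (((n:ℝ) + 2) + 1) / 2 / ((n:ℝ) + 2) ^ 3) := by
    refine Finset.sum_congr rfl fun n _ => ?_
    rw [hsqrt]; push_cast; ring
  rw [c1, c2, c3]
  have := tele A h0 (N + 1)
  rw [this, hN (N + 1 + 1) (by omega)]
  simp
end

section
/- For every integer n ≥ 2, T(n) > 0, where T(n) = 1 + 2(n+3)^2/((n+2)(n+4)) + (n+3)(n+2)/((n+4)(n+1)) - 2 ((n+3)(n+2)/((n+4)(n+1))) ((n-1)/n)^{3/2} - 2 ((n+2)/(n+1))^{3/2}. -/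
set_option maxHeartbeats 1000000 in
theorem stmt_14 (n : ℕ) (hn : 2 ≤ n) :
    0 < 1 + 2 * ((n : ℝ) + 3) ^ 2 / (((n : ℝ) + 2) * ((n : ℝ) + 4))
        + ((n : ℝ) + 3) * ((n : ℝ) + 2) / (((n : ℝ) + 4) * ((n : ℝ) + 1))
        - 2 * (((n : ℝ) + 3) * ((n : ℝ) + 2) / (((n : ℝ) + 4) * ((n : ℝ) + 1))) *
            (((n : ℝ) - 1) / (n : ℝ)) ^ ((3 : ℝ) / 2)
        - 2 * (((n : ℝ) + 2) / ((n : ℝ) + 1)) ^ ((3 : ℝ) / 2) := by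
  have hx : (2 : ℝ) ≤ (n : ℝ) := by exact_mod_cast hn
  set x : ℝ := (n : ℝ) with hxdef
  have hx0 : (0 : ℝ) < x := by linarith
  have h1pos : (0 : ℝ) < x + 1 := by linarith
  have h2pos : (0 : ℝ) < x + 2 := by linarith
  have h4pos : (0 : ℝ) < x + 4 := by linarith
  -- bound the first rpow term
  have ht0 : (0 : ℝ) ≤ (x - 1) / x := div_nonneg (by linarith) hx0.le
  have hc1 : (0 : ℝ) < 1 - 3 / (2 * x) + 1 / (2 * x ^ 2) := by
    have heq : (1 : ℝ) - 3 / (2 * x) + 1 / (2 * x ^ 2)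
        = ((2 * x - 1) * (x - 1)) / (2 * x ^ 2) := by
      field_simp; ring
    rw [heq]
    apply div_pos (by nlinarith) (by positivity)
  have ha : ((x - 1) / x) ^ ((3 : ℝ) / 2) ≤ 1 - 3 / (2 * x) + 1 / (2 * x ^ 2) := by
    have hsq : (((x - 1) / x) ^ ((3 : ℝ) / 2)) ^ 2 = ((x - 1) / x) ^ 3 := by
      rw [← Real.rpow_natCast (((x - 1) / x) ^ ((3 : ℝ) / 2)) 2,
        ← Real.rpow_mul ht0,
        show (3 : ℝ) / 2 * (2 : ℕ) = ((3 : ℕ) : ℝ) by norm_num,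
        Real.rpow_natCast]
    have hle : (((x - 1) / x) ^ ((3 : ℝ) / 2)) ^ 2
        ≤ (1 - 3 / (2 * x) + 1 / (2 * x ^ 2)) ^ 2 := by
      rw [hsq, div_pow]
      rw [div_le_iff₀ (by positivity)]
      have key : (1 - 3 / (2 * x) + 1 / (2 * x ^ 2)) ^ 2
          = ((2 * x - 1) * (x - 1)) ^ 2 / (2 * x ^ 2) ^ 2 := by
        field_simp; ring
      rw [key, div_mul_eq_mul_div, le_div_iff₀ (by positivity)]
      nlinarith [sq_nonneg (x - 1), pow_pos hx0 3,
        mul_nonneg (pow_nonneg hx0.le 3) (sq_nonneg (x - 1))]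
    have := Real.rpow_nonneg ht0 ((3 : ℝ) / 2)
    nlinarith [this, hc1]
  -- bound the second rpow term
  have hu0 : (0 : ℝ) ≤ (x + 2) / (x + 1) := by positivity
  have hc2 : (0 : ℝ) < 1 + 3 / (2 * (x + 1)) + 1 / (2 * (x + 1) ^ 2) := by positivity
  have hb : ((x + 2) / (x + 1)) ^ ((3 : ℝ) / 2)
      ≤ 1 + 3 / (2 * (x + 1)) + 1 / (2 * (x + 1) ^ 2) := by
    have hsq : (((x + 2) / (x + 1)) ^ ((3 : ℝ) / 2)) ^ 2 = ((x + 2) / (x + 1)) ^ 3 := by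
      rw [← Real.rpow_natCast (((x + 2) / (x + 1)) ^ ((3 : ℝ) / 2)) 2,
        ← Real.rpow_mul hu0,
        show (3 : ℝ) / 2 * (2 : ℕ) = ((3 : ℕ) : ℝ) by norm_num,
        Real.rpow_natCast]
    have hle : (((x + 2) / (x + 1)) ^ ((3 : ℝ) / 2)) ^ 2
        ≤ (1 + 3 / (2 * (x + 1)) + 1 / (2 * (x + 1) ^ 2)) ^ 2 := by
      rw [hsq, div_pow]
      rw [div_le_iff₀ (by positivity)]
      have key : (1 + 3 / (2 * (x + 1)) + 1 / (2 * (x + 1) ^ 2)) ^ 2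
          = ((2 * x + 3) * (x + 2)) ^ 2 / (2 * (x + 1) ^ 2) ^ 2 := by
        field_simp; ring
      rw [key, div_mul_eq_mul_div, le_div_iff₀ (by positivity)]
      nlinarith [pow_pos h1pos 3, mul_nonneg (pow_nonneg h1pos.le 3) (sq_nonneg (x + 1))]
    have := Real.rpow_nonneg hu0 ((3 : ℝ) / 2)
    nlinarith [this, hc2]
  -- the rational part
  have hA : (0 : ℝ) < (x + 3) * (x + 2) / ((x + 4) * (x + 1)) := by positivity
  have key : 1 + 2 * (x + 3) ^ 2 / ((x + 2) * (x + 4))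
      + (x + 3) * (x + 2) / ((x + 4) * (x + 1))
      - 2 * ((x + 3) * (x + 2) / ((x + 4) * (x + 1))) * (1 - 3 / (2 * x) + 1 / (2 * x ^ 2))
      - 2 * (1 + 3 / (2 * (x + 1)) + 1 / (2 * (x + 1) ^ 2))
      = (2 * x ^ 4 + 22 * x ^ 3 + 54 * x ^ 2 + 16 * x - 24)
        / (2 * x ^ 2 * (x + 1) ^ 2 * (x + 2) * (x + 4)) := by
    field_simp
    ring
  have hnum : (0 : ℝ) < (2 * x ^ 4 + 22 * x ^ 3 + 54 * x ^ 2 + 16 * x - 24)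
      / (2 * x ^ 2 * (x + 1) ^ 2 * (x + 2) * (x + 4)) := by
    apply div_pos
    · nlinarith
    · positivity
  have hmul : 2 * ((x + 3) * (x + 2) / ((x + 4) * (x + 1))) * (((x - 1) / x) ^ ((3 : ℝ) / 2))
      ≤ 2 * ((x + 3) * (x + 2) / ((x + 4) * (x + 1)))
        * (1 - 3 / (2 * x) + 1 / (2 * x ^ 2)) := by
    apply mul_le_mul_of_nonneg_left ha
    positivity
  nlinarith [key, hnum, hmul, hb]
end

section
/- For every integer n ≥ 2, U(n) < ((n+2)/(n+1))^{3/2} ((n+3)/(n+2))^{3/2}, where U(n) = 1 + 2(n+3)^2/((n+2)(n+4)) + (n+3)(n+2)/((n+4)(n+1)) - ((n+3)(n+2)/((n+4)(n+1))) ((n-1)/n)^{3/2} ((n+1)/(n+2))^{3/2} - ((n+3)(n+2)/((n+4)(n+1))) ((n-1)/n)^{3/2} - ((n+2)/(n+1))^{3/2}. -/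
lemma key_pow_bound (x : ℝ) (h1 : -2/3 ≤ x) (h2 : x ≤ 2) :
    1 + 3/2*x + 3/8*x^2 - 1/16*x^3 ≤ (1+x) ^ ((3:ℝ)/2) := by
  have hx : (0:ℝ) ≤ 1 + x := by linarith
  have hP : (0:ℝ) ≤ 1 + 3/2*x + 3/8*x^2 - 1/16*x^3 := by
    nlinarith [sq_nonneg x, sq_nonneg (1+x), sq_nonneg (x-1), sq_nonneg (3*x+2)]
  have hq : (0:ℝ) ≤ 12 + 12*x - x^2 := by nlinarith
  have hx4 : (0:ℝ) ≤ x^4 := by positivity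
  have hsq : (1 + 3/2*x + 3/8*x^2 - 1/16*x^3)^2 ≤ (1+x)^3 := by
    nlinarith [mul_nonneg hx4 hq]
  have heq : (1+x) ^ ((3:ℝ)/2) = Real.sqrt ((1+x)^3) := by
    rw [show ((3:ℝ)/2) = (3:ℕ) * (1/2 : ℝ) by norm_num, Real.rpow_mul hx,
      Real.rpow_natCast, ← Real.sqrt_eq_rpow]
  rw [heq]
  calc 1 + 3/2*x + 3/8*x^2 - 1/16*x^3
      = Real.sqrt ((1 + 3/2*x + 3/8*x^2 - 1/16*x^3)^2) := (Real.sqrt_sq hP).symm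
    _ ≤ Real.sqrt ((1+x)^3) := Real.sqrt_le_sqrt hsq

set_option maxHeartbeats 2000000 in
theorem stmt_15 (n : ℕ) (hn : 2 ≤ n) :
    1 + 2 * ((n : ℝ) + 3) ^ 2 / (((n : ℝ) + 2) * ((n : ℝ) + 4))
        + ((n : ℝ) + 3) * ((n : ℝ) + 2) / (((n : ℝ) + 4) * ((n : ℝ) + 1))
        - (((n : ℝ) + 3) * ((n : ℝ) + 2) / (((n : ℝ) + 4) * ((n : ℝ) + 1))) *
            (((n : ℝ) - 1) / (n : ℝ)) ^ ((3 : ℝ) / 2) *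
            (((n : ℝ) + 1) / ((n : ℝ) + 2)) ^ ((3 : ℝ) / 2)
        - (((n : ℝ) + 3) * ((n : ℝ) + 2) / (((n : ℝ) + 4) * ((n : ℝ) + 1))) *
            (((n : ℝ) - 1) / (n : ℝ)) ^ ((3 : ℝ) / 2)
        - (((n : ℝ) + 2) / ((n : ℝ) + 1)) ^ ((3 : ℝ) / 2)
      < (((n : ℝ) + 2) / ((n : ℝ) + 1)) ^ ((3 : ℝ) / 2) *
          (((n : ℝ) + 3) / ((n : ℝ) + 2)) ^ ((3 : ℝ) / 2) := by
  have hN : (2:ℝ) ≤ (n:ℝ) := by exact_mod_cast hn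
  set N : ℝ := (n:ℝ) with hNdef
  have h0 : (0:ℝ) < N := by linarith
  have h1 : (0:ℝ) < N + 1 := by linarith
  have h2 : (0:ℝ) < N + 2 := by linarith
  have h4 : (0:ℝ) < N + 4 := by linarith
  set xa : ℝ := -1/N with hxa
  set xab : ℝ := -(2*N+1)/(N*(N+2)) with hxab
  set xc : ℝ := 1/(N+1) with hxc
  set xcd : ℝ := 2/(N+1) with hxcd
  have hQa : 1 + 3/2*xa + 3/8*xa^2 - 1/16*xa^3 ≤ ((N-1)/N) ^ ((3:ℝ)/2) := by
    have := key_pow_bound xa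
      (by rw [hxa, div_le_div_iff₀ (by norm_num : (0:ℝ)<3) h0]; nlinarith)
      (by rw [hxa, div_le_iff₀ h0]; nlinarith)
    have e : (1 + xa) = (N-1)/N := by rw [hxa]; field_simp; ring
    rwa [e] at this
  have hQab : 1 + 3/2*xab + 3/8*xab^2 - 1/16*xab^3 ≤
      ((N-1)/N) ^ ((3:ℝ)/2) * ((N+1)/(N+2)) ^ ((3:ℝ)/2) := by
    have hb1 : (0:ℝ) ≤ (N-1)/N := div_nonneg (by linarith) h0.le
    have hb2 : (0:ℝ) ≤ (N+1)/(N+2) := by positivity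
    have := key_pow_bound xab
      (by rw [hxab, div_le_div_iff₀ (by norm_num : (0:ℝ)<3) (by positivity : (0:ℝ) < N*(N+2))]; nlinarith)
      (by rw [hxab, div_le_iff₀ (by positivity : (0:ℝ) < N*(N+2))]; nlinarith)
    have e : (1 + xab) = ((N-1)/N) * ((N+1)/(N+2)) := by rw [hxab]; field_simp; ring
    rwa [e, Real.mul_rpow hb1 hb2] at this
  have hQc : 1 + 3/2*xc + 3/8*xc^2 - 1/16*xc^3 ≤ ((N+2)/(N+1)) ^ ((3:ℝ)/2) := by
    have := key_pow_bound xc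
      (by rw [hxc]; nlinarith [div_pos (by norm_num : (0:ℝ)<1) h1])
      (by rw [hxc, div_le_iff₀ h1]; linarith)
    have e : (1 + xc) = (N+2)/(N+1) := by rw [hxc]; field_simp; ring
    rwa [e] at this
  have hQcd : 1 + 3/2*xcd + 3/8*xcd^2 - 1/16*xcd^3 ≤
      ((N+2)/(N+1)) ^ ((3:ℝ)/2) * ((N+3)/(N+2)) ^ ((3:ℝ)/2) := by
    have hb1 : (0:ℝ) ≤ (N+2)/(N+1) := by positivity
    have hb2 : (0:ℝ) ≤ (N+3)/(N+2) := by positivity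
    have := key_pow_bound xcd
      (by rw [hxcd]; nlinarith [div_pos (by norm_num : (0:ℝ)<2) h1])
      (by rw [hxcd, div_le_iff₀ h1]; linarith)
    have e : (1 + xcd) = ((N+2)/(N+1)) * ((N+3)/(N+2)) := by rw [hxcd]; field_simp; ring
    rwa [e, Real.mul_rpow hb1 hb2] at this
  have hK : (0:ℝ) ≤ (N+3)*(N+2)/((N+4)*(N+1)) := by positivity
  have hKab := mul_le_mul_of_nonneg_left hQab hK
  have hKa := mul_le_mul_of_nonneg_left hQa hK
  have hmid : 1 + 2*(N+3)^2/((N+2)*(N+4)) + (N+3)*(N+2)/((N+4)*(N+1))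
      - ((N+3)*(N+2)/((N+4)*(N+1))) * (1 + 3/2*xab + 3/8*xab^2 - 1/16*xab^3)
      - ((N+3)*(N+2)/((N+4)*(N+1))) * (1 + 3/2*xa + 3/8*xa^2 - 1/16*xa^3)
      - (1 + 3/2*xc + 3/8*xc^2 - 1/16*xc^3)
      < 1 + 3/2*xcd + 3/8*xcd^2 - 1/16*xcd^3 := by
    have hm : (0:ℝ) ≤ N - 2 := by linarith
    rw [hxa, hxab, hxc, hxcd]
    have hn0 : N ≠ 0 := ne_of_gt h0
    have hn1 : N + 1 ≠ 0 := ne_of_gt h1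
    have hn2 : N + 2 ≠ 0 := ne_of_gt h2
    have hn4 : N + 4 ≠ 0 := ne_of_gt h4
    have hnum : (0:ℝ) < 60*N^8+464*N^7+1227*N^6+1037*N^5-516*N^4-709*N^3+615*N^2+621*N+54 := by
      nlinarith [hm, pow_nonneg hm 2, pow_nonneg hm 3, pow_nonneg hm 4, pow_nonneg hm 5,
        pow_nonneg hm 6, pow_nonneg hm 7, pow_nonneg hm 8]
    have hden : (0:ℝ) < 16*N^3*(N+1)^3*(N+2)^3*(N+4) := by positivity
    have hdiff : (1 + 3/2*(2/(N+1)) + 3/8*(2/(N+1))^2 - 1/16*(2/(N+1))^3)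
        - (1 + 2*(N+3)^2/((N+2)*(N+4)) + (N+3)*(N+2)/((N+4)*(N+1))
          - ((N+3)*(N+2)/((N+4)*(N+1))) * (1 + 3/2*(-(2*N+1)/(N*(N+2))) + 3/8*(-(2*N+1)/(N*(N+2)))^2 - 1/16*(-(2*N+1)/(N*(N+2)))^3)
          - ((N+3)*(N+2)/((N+4)*(N+1))) * (1 + 3/2*(-1/N) + 3/8*(-1/N)^2 - 1/16*(-1/N)^3)
          - (1 + 3/2*(1/(N+1)) + 3/8*(1/(N+1))^2 - 1/16*(1/(N+1))^3))
        = (60*N^8+464*N^7+1227*N^6+1037*N^5-516*N^4-709*N^3+615*N^2+621*N+54)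
          / (16*N^3*(N+1)^3*(N+2)^3*(N+4)) := by
      field_simp
      ring
    have hpos := div_pos hnum hden
    rw [← hdiff] at hpos
    linarith
  nlinarith [hKab, hKa, hQc, hQcd, hmid]
end

section
/- Let μ_n = n^{3/2}, p_n = μ_{n+1}/μ_n = ((n+1)/n)^{3/2}, and δ_n = (n+2)/(n+1). Define γ_1^2 = (μ_2/μ_1)(2 δ_2/δ_3 + δ_1/δ_3 + 1) - μ_3/μ_1 and recursively γ_n^2 = (1/(δ_{n+1} δ_{n+2})) (μ_{n+1}/μ_n) [2δ_{n+1}^2 + δ_n δ_{n+1} + δ_{n+1} δ_{n+2} - (μ_{n+2}/μ_{n+1}) δ_{n+1} δ_{n+2} - (μ_{n-1}/μ_n) δ_n δ_{n+1} - (μ_{n+1}/(μ_n γ_{n-1}^2)) δ_n δ_{n+1}] for n ≥ 2. Then for every n ≥ 1, p_n p_{n+1} < γ_n^2 < p_n p_{n+1} p_{n+2}. -/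
private lemma rpow32 {x : ℝ} (hx : 0 ≤ x) : x ^ ((3:ℝ)/2) = Real.sqrt (x ^ 3) := by
  rw [show (3:ℝ)/2 = (3:ℝ) * (1/2) by norm_num, Real.rpow_mul hx, Real.sqrt_eq_rpow,
    show ((3:ℝ)) = ((3:ℕ):ℝ) by norm_num, Real.rpow_natCast]

private lemma ub_plus {u : ℝ} (hu : 0 ≤ u) :
    Real.sqrt ((1+u)^3) ≤ 1 + 3*u/2 + 3*u^2/8 := by
  rw [Real.sqrt_le_iff]
  constructor
  · nlinarith [sq_nonneg u]
  · nlinarith [pow_nonneg hu 3, pow_nonneg hu 4]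

private lemma lb_plus {u : ℝ} (hu : 0 ≤ u) (hu2 : u ≤ 2) :
    1 + 3*u/2 + 3*u^2/8 - u^3/16 ≤ Real.sqrt ((1+u)^3) := by
  apply Real.le_sqrt_of_sq_le
  nlinarith [pow_nonneg hu 4, pow_nonneg hu 5,
    mul_nonneg (pow_nonneg hu 4) (sub_nonneg.2 hu2),
    mul_nonneg (pow_nonneg hu 5) (sub_nonneg.2 hu2)]

private lemma ub_minus {v : ℝ} (h0 : 0 ≤ v) (h1 : v ≤ 1/2) :
    Real.sqrt ((1-v)^3) ≤ 1 - 3*v/2 + 3*v^2/8 + v^3/8 := by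
  rw [Real.sqrt_le_iff]
  constructor
  · nlinarith [pow_nonneg h0 3, sq_nonneg v]
  · nlinarith [pow_nonneg h0 3, pow_nonneg h0 5, pow_nonneg h0 6,
      mul_nonneg (pow_nonneg h0 3) (sub_nonneg.2 h1)]

private lemma lb_minus {v : ℝ} (h0 : 0 ≤ v) (h1 : v ≤ 3/4) :
    1 - 3*v/2 + 3*v^2/8 + v^3/16 ≤ Real.sqrt ((1-v)^3) := by
  apply Real.le_sqrt_of_sq_le
  nlinarith [pow_nonneg h0 5,
    mul_nonneg (pow_nonneg h0 3) (sub_nonneg.2 h1),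
    mul_nonneg (pow_nonneg h0 4) (sub_nonneg.2 h1),
    mul_nonneg (pow_nonneg h0 5) (sub_nonneg.2 h1)]

private lemma keyI {y s2 s3 : ℝ} (hy : 1 ≤ y)
    (h2 : s2 ≤ 1 + 3*(1/(y+2))/2 + 3*(1/(y+2))^2/8)
    (h3 : s3 ≤ 1 - 3*(1/(y+1))/2 + 3*(1/(y+1))^2/8 + (1/(y+1))^3/8) :
    2*(s2*((y+5)/(y+4))) + 2*(s3*((y+3)/(y+2)))
      ≤ 2*((y+4)/(y+3)) + (y+3)/(y+2) + (y+5)/(y+4) := by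
  have hy0 : (0:ℝ) ≤ y := by linarith
  have e1 : (y:ℝ)+1 ≠ 0 := by positivity
  have e2 : (y:ℝ)+2 ≠ 0 := by positivity
  have e3 : (y:ℝ)+3 ≠ 0 := by positivity
  have e4 : (y:ℝ)+4 ≠ 0 := by positivity
  have ha : (0:ℝ) ≤ (y+3)/(y+2) := by positivity
  have hc : (0:ℝ) ≤ (y+5)/(y+4) := by positivity
  have step : 2*((1 + 3*(1/(y+2))/2 + 3*(1/(y+2))^2/8)*((y+5)/(y+4)))
      + 2*((1 - 3*(1/(y+1))/2 + 3*(1/(y+1))^2/8 + (1/(y+1))^3/8)*((y+3)/(y+2)))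
      ≤ 2*((y+4)/(y+3)) + (y+3)/(y+2) + (y+5)/(y+4) := by
    rw [← sub_nonneg]
    have e : 2*((y+4)/(y+3)) + (y+3)/(y+2) + (y+5)/(y+4)
        - (2*((1 + 3*(1/(y+2))/2 + 3*(1/(y+2))^2/8)*((y+5)/(y+4)))
          + 2*((1 - 3*(1/(y+1))/2 + 3*(1/(y+1))^2/8 + (1/(y+1))^3/8)*((y+3)/(y+2))))
        = (1240 + 5908*y + 9300*y^2 + 6680*y^3 + 2372*y^4 + 396*y^5 + 24*y^6)
          / (16*(y+1)^3*(y+2)^3*(y+3)*(y+4)) := by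
      field_simp
      ring
    rw [e]
    apply div_nonneg
    · have p2 := pow_nonneg hy0 2
      have p3 := pow_nonneg hy0 3
      have p4 := pow_nonneg hy0 4
      have p5 := pow_nonneg hy0 5
      have p6 := pow_nonneg hy0 6
      linarith
    · positivity
  have m1 := mul_le_mul_of_nonneg_right h2 hc
  have m2 := mul_le_mul_of_nonneg_right h3 ha
  linarith

private lemma keyII {y s2 s3 s5 s6 : ℝ} (hy : 1 ≤ y)
    (h2 : 1 + 3*(1/(y+2))/2 + 3*(1/(y+2))^2/8 - (1/(y+2))^3/16 ≤ s2)
    (h6 : 1 + 3*(2/(y+2))/2 + 3*(2/(y+2))^2/8 - (2/(y+2))^3/16 ≤ s6)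
    (h3 : 1 - 3*(1/(y+1))/2 + 3*(1/(y+1))^2/8 + (1/(y+1))^3/16 ≤ s3)
    (h5 : 1 - 3*((2*y+3)/((y+1)*(y+3)))/2 + 3*((2*y+3)/((y+1)*(y+3)))^2/8
        + ((2*y+3)/((y+1)*(y+3)))^3/16 ≤ s5) :
    2*((y+4)/(y+3)) + (y+3)/(y+2) + (y+5)/(y+4)
      ≤ (s2+s6)*((y+5)/(y+4)) + (s3+s5)*((y+3)/(y+2)) := by
  have hy0 : (0:ℝ) ≤ y := by linarith
  have e1 : (y:ℝ)+1 ≠ 0 := by positivity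
  have e2 : (y:ℝ)+2 ≠ 0 := by positivity
  have e3 : (y:ℝ)+3 ≠ 0 := by positivity
  have e4 : (y:ℝ)+4 ≠ 0 := by positivity
  have ha : (0:ℝ) ≤ (y+3)/(y+2) := by positivity
  have hc : (0:ℝ) ≤ (y+5)/(y+4) := by positivity
  have step : 2*((y+4)/(y+3)) + (y+3)/(y+2) + (y+5)/(y+4)
      ≤ ((1 + 3*(1/(y+2))/2 + 3*(1/(y+2))^2/8 - (1/(y+2))^3/16)
          + (1 + 3*(2/(y+2))/2 + 3*(2/(y+2))^2/8 - (2/(y+2))^3/16))*((y+5)/(y+4))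
        + ((1 - 3*(1/(y+1))/2 + 3*(1/(y+1))^2/8 + (1/(y+1))^3/16)
          + (1 - 3*((2*y+3)/((y+1)*(y+3)))/2 + 3*((2*y+3)/((y+1)*(y+3)))^2/8
            + ((2*y+3)/((y+1)*(y+3)))^3/16))*((y+3)/(y+2)) := by
    rw [← sub_nonneg]
    have e : ((1 + 3*(1/(y+2))/2 + 3*(1/(y+2))^2/8 - (1/(y+2))^3/16)
          + (1 + 3*(2/(y+2))/2 + 3*(2/(y+2))^2/8 - (2/(y+2))^3/16))*((y+5)/(y+4))
        + ((1 - 3*(1/(y+1))/2 + 3*(1/(y+1))^2/8 + (1/(y+1))^3/16)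
          + (1 - 3*((2*y+3)/((y+1)*(y+3)))/2 + 3*((2*y+3)/((y+1)*(y+3)))^2/8
            + ((2*y+3)/((y+1)*(y+3)))^3/16))*((y+3)/(y+2))
        - (2*((y+4)/(y+3)) + (y+3)/(y+2) + (y+5)/(y+4))
        = (2853 + 13935*y + 35591*y^2 + 51737*y^3 + 43514*y^4 + 21503*y^5
            + 6155*y^6 + 944*y^7 + 60*y^8)
          / (16*(y+1)^3*(y+2)^3*(y+3)^3*(y+4)) := by
      field_simp
      ring
    rw [e]
    apply div_nonneg
    · have p2 := pow_nonneg hy0 2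
      have p3 := pow_nonneg hy0 3
      have p4 := pow_nonneg hy0 4
      have p5 := pow_nonneg hy0 5
      have p6 := pow_nonneg hy0 6
      have p7 := pow_nonneg hy0 7
      have p8 := pow_nonneg hy0 8
      linarith
    · positivity
  have m1 := mul_le_mul_of_nonneg_right (add_le_add h2 h6) hc
  have m2 := mul_le_mul_of_nonneg_right (add_le_add h3 h5) ha
  linarith

set_option maxHeartbeats 2000000 in
theorem stmt_16 (mu p delta : ℕ → ℝ) (gsq : ℕ → ℝ)
    (hmu : ∀ n, mu n = (n : ℝ) ^ ((3 : ℝ) / 2))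
    (hp : ∀ n, p n = mu (n + 1) / mu n)
    (hdelta : ∀ n, delta n = ((n : ℝ) + 2) / ((n : ℝ) + 1))
    (hg1 : gsq 1 = (mu 2 / mu 1) * (2 * delta 2 / delta 3 + delta 1 / delta 3 + 1) - mu 3 / mu 1)
    (hgrec : ∀ n, 2 ≤ n →
      gsq n = (1 / (delta (n + 1) * delta (n + 2))) * (mu (n + 1) / mu n) *
        (2 * delta (n + 1) ^ 2 + delta n * delta (n + 1) + delta (n + 1) * delta (n + 2)
          - (mu (n + 2) / mu (n + 1)) * delta (n + 1) * delta (n + 2)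
          - (mu (n - 1) / mu n) * delta n * delta (n + 1)
          - (mu (n + 1) / (mu n * gsq (n - 1))) * delta n * delta (n + 1))) :
    ∀ n, 1 ≤ n → p n * p (n + 1) < gsq n ∧ gsq n < p n * p (n + 1) * p (n + 2) := by
  have hmupos : ∀ k : ℕ, 0 < k → (0:ℝ) < mu k := by
    intro k hk
    rw [hmu]
    apply Real.rpow_pos_of_pos
    exact_mod_cast hk
  have hratio : ∀ j k : ℕ, 0 < k → mu j / mu k = Real.sqrt (((j:ℝ)/(k:ℝ))^3) := by
    intro j k hk
    have hk' : (0:ℝ) < (k:ℝ) := by exact_mod_cast hk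
    rw [hmu, hmu, rpow32 (by positivity : (0:ℝ) ≤ (j:ℝ)), rpow32 hk'.le, div_pow,
      Real.sqrt_div (by positivity)]
  have hpp : ∀ k : ℕ, 0 < k → p k * p (k+1) = mu (k+2) / mu k := by
    intro k hk
    have h0 : mu k ≠ 0 := ne_of_gt (hmupos _ hk)
    have h1 : mu (k+1) ≠ 0 := ne_of_gt (hmupos _ (by omega))
    rw [hp, hp]
    field_simp
  have hppp : ∀ k : ℕ, 0 < k → p k * p (k+1) * p (k+2) = mu (k+3) / mu k := by
    intro k hk
    have h0 : mu k ≠ 0 := ne_of_gt (hmupos _ hk)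
    have h2 : mu (k+2) ≠ 0 := ne_of_gt (hmupos _ (by omega))
    rw [hpp k hk, hp]
    have e : k + 2 + 1 = k + 3 := rfl
    rw [e]
    field_simp
  intro n hn
  induction n, hn using Nat.le_induction with
  | base =>
    show p 1 * p 2 < gsq 1 ∧ gsq 1 < p 1 * p 2 * p 3
    have hd1 : delta 1 = 3/2 := by rw [hdelta]; norm_num
    have hd2 : delta 2 = 4/3 := by rw [hdelta]; norm_num
    have hd3 : delta 3 = 5/4 := by rw [hdelta]; norm_num
    have hmu1 : mu 1 = 1 := by rw [hmu]; norm_num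
    have hmu2 : mu 2 = Real.sqrt 8 := by
      rw [hmu, rpow32 (by positivity)]
      norm_num
    have hmu3 : mu 3 = Real.sqrt 27 := by
      rw [hmu, rpow32 (by positivity)]
      norm_num
    have hmu4 : mu 4 = 8 := by
      rw [hmu, rpow32 (by positivity)]
      rw [show (((4:ℕ)):ℝ)^3 = 64 by norm_num, show (64:ℝ) = 8^2 by norm_num,
        Real.sqrt_sq (by norm_num)]
    have hsq8 : Real.sqrt 8 < 2.8285 := by
      rw [Real.sqrt_lt' (by norm_num)]; norm_num
    have hsq8' : (2.8284:ℝ) < Real.sqrt 8 := by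
      rw [Real.lt_sqrt (by norm_num)]; norm_num
    have hsq27 : Real.sqrt 27 < 5.1962 := by
      rw [Real.sqrt_lt' (by norm_num)]; norm_num
    have hsq27' : (5.1961:ℝ) < Real.sqrt 27 := by
      rw [Real.lt_sqrt (by norm_num)]; norm_num
    have e1 : p 1 * p 2 = Real.sqrt 27 := by
      have h := hpp 1 (by norm_num)
      norm_num at h
      rw [h, hmu3, hmu1, div_one]
    have e2 : p 1 * p 2 * p 3 = 8 := by
      have h := hppp 1 (by norm_num)
      norm_num at h
      rw [h, hmu4, hmu1, div_one]
    have e3 : gsq 1 = Real.sqrt 8 * (13/3) - Real.sqrt 27 := by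
      rw [hg1, hd1, hd2, hd3, hmu1, hmu2, hmu3]
      norm_num
    rw [e3, e2, e1]
    constructor
    · nlinarith
    · nlinarith
  | succ n hn ih =>
    have hy : (1:ℝ) ≤ (n:ℝ) := by exact_mod_cast hn
    have hy0 : (0:ℝ) < (n:ℝ) := by linarith
    have hne0 : ((n:ℝ)) ≠ 0 := ne_of_gt hy0
    have hne1 : ((n:ℝ))+1 ≠ 0 := by positivity
    have hne2 : ((n:ℝ))+2 ≠ 0 := by positivity
    have hne3 : ((n:ℝ))+3 ≠ 0 := by positivity
    have hne4 : ((n:ℝ))+4 ≠ 0 := by positivity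
    have hne5 : ((n:ℝ))+5 ≠ 0 := by positivity
    -- the recursion
    have hgsq := hgrec (n+1) (by omega)
    simp only [show n+1+1 = n+2 from rfl, show n+1+2 = n+3 from rfl,
      Nat.add_sub_cancel] at hgsq
    -- rewrite deltas
    have hdel1 : delta (n+1) = ((n:ℝ)+3)/((n:ℝ)+2) := by
      rw [hdelta]; push_cast; ring
    have hdel2 : delta (n+2) = ((n:ℝ)+4)/((n:ℝ)+3) := by
      rw [hdelta]; push_cast; ring
    have hdel3 : delta (n+3) = ((n:ℝ)+5)/((n:ℝ)+4) := by
      rw [hdelta]; push_cast; ring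
    -- mu ratios as square roots
    have hq1 : mu (n+2) / mu (n+1) = Real.sqrt ((((n:ℝ)+2)/((n:ℝ)+1))^3) := by
      rw [hratio _ _ (by omega)]; congr 1; push_cast; ring
    have hs2 : mu (n+3) / mu (n+2) = Real.sqrt ((((n:ℝ)+3)/((n:ℝ)+2))^3) := by
      rw [hratio _ _ (by omega)]; congr 1; push_cast; ring
    have hs3 : mu n / mu (n+1) = Real.sqrt (((n:ℝ)/((n:ℝ)+1))^3) := by
      rw [hratio _ _ (by omega)]; congr 1; push_cast; ring
    have hLeq : p n * p (n+1) = Real.sqrt ((((n:ℝ)+2)/(n:ℝ))^3) := by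
      rw [hpp n (by omega), hratio _ _ (by omega)]; congr 1; push_cast; ring
    have hHeq : p n * p (n+1) * p (n+2) = Real.sqrt ((((n:ℝ)+3)/(n:ℝ))^3) := by
      rw [hppp n (by omega), hratio _ _ (by omega)]; congr 1; push_cast; ring
    have hP2 : p (n+1) * p (n+2) = Real.sqrt ((((n:ℝ)+3)/((n:ℝ)+1))^3) := by
      rw [hpp (n+1) (by omega), hratio _ _ (by omega)]; congr 1; push_cast; ring
    have hP3 : p (n+1) * p (n+2) * p (n+3) = Real.sqrt ((((n:ℝ)+4)/((n:ℝ)+1))^3) := by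
      rw [hppp (n+1) (by omega), hratio _ _ (by omega)]; congr 1; push_cast; ring
    -- positivity of sqrt atoms
    have hq1pos : 0 < Real.sqrt ((((n:ℝ)+2)/((n:ℝ)+1))^3) := Real.sqrt_pos.2 (by positivity)
    have hLpos : 0 < Real.sqrt ((((n:ℝ)+2)/(n:ℝ))^3) := Real.sqrt_pos.2 (by positivity)
    have hHpos : 0 < Real.sqrt ((((n:ℝ)+3)/(n:ℝ))^3) := Real.sqrt_pos.2 (by positivity)
    -- product identities
    have hq1L : Real.sqrt ((((n:ℝ)+2)/((n:ℝ)+1))^3)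
        = Real.sqrt (((n:ℝ)/((n:ℝ)+1))^3) * Real.sqrt ((((n:ℝ)+2)/(n:ℝ))^3) := by
      rw [← Real.sqrt_mul (by positivity)]
      congr 1; field_simp
    have hq1H : Real.sqrt ((((n:ℝ)+2)/((n:ℝ)+1))^3)
        = Real.sqrt (((n:ℝ)*((n:ℝ)+2)/(((n:ℝ)+1)*((n:ℝ)+3)))^3)
          * Real.sqrt ((((n:ℝ)+3)/(n:ℝ))^3) := by
      rw [← Real.sqrt_mul (by positivity)]
      congr 1; field_simp
    have hP2e : Real.sqrt ((((n:ℝ)+3)/((n:ℝ)+1))^3)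
        = Real.sqrt ((((n:ℝ)+2)/((n:ℝ)+1))^3) * Real.sqrt ((((n:ℝ)+3)/((n:ℝ)+2))^3) := by
      rw [← Real.sqrt_mul (by positivity)]
      congr 1; field_simp
    have hP3e : Real.sqrt ((((n:ℝ)+4)/((n:ℝ)+1))^3)
        = Real.sqrt ((((n:ℝ)+2)/((n:ℝ)+1))^3) * Real.sqrt ((((n:ℝ)+4)/((n:ℝ)+2))^3) := by
      rw [← Real.sqrt_mul (by positivity)]
      congr 1; field_simp
    -- bounds from the induction hypothesis
    rw [hHeq, hLeq] at ih
    obtain ⟨ihl, ihu⟩ := ih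
    have hg0 : 0 < gsq n := lt_trans hLpos ihl
    -- the division term
    have hTround : mu (n+2) / (mu (n+1) * gsq n)
        = Real.sqrt ((((n:ℝ)+2)/((n:ℝ)+1))^3) / gsq n := by
      rw [← div_div, hq1]
    have hTup : Real.sqrt ((((n:ℝ)+2)/((n:ℝ)+1))^3) / gsq n
        < Real.sqrt (((n:ℝ)/((n:ℝ)+1))^3) := by
      have h1 := div_lt_div_of_pos_left hq1pos hLpos ihl
      have h2 : Real.sqrt ((((n:ℝ)+2)/((n:ℝ)+1))^3) / Real.sqrt ((((n:ℝ)+2)/(n:ℝ))^3)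
          = Real.sqrt (((n:ℝ)/((n:ℝ)+1))^3) := by
        rw [hq1L, mul_div_assoc, div_self (ne_of_gt hLpos), mul_one]
      linarith
    have hTlow : Real.sqrt (((n:ℝ)*((n:ℝ)+2)/(((n:ℝ)+1)*((n:ℝ)+3)))^3)
        < Real.sqrt ((((n:ℝ)+2)/((n:ℝ)+1))^3) / gsq n := by
      have h1 := div_lt_div_of_pos_left hq1pos hg0 ihu
      have h2 : Real.sqrt ((((n:ℝ)+2)/((n:ℝ)+1))^3) / Real.sqrt ((((n:ℝ)+3)/(n:ℝ))^3)
          = Real.sqrt (((n:ℝ)*((n:ℝ)+2)/(((n:ℝ)+1)*((n:ℝ)+3)))^3) := by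
        rw [hq1H, mul_div_assoc, div_self (ne_of_gt hHpos), mul_one]
      linarith
    -- sqrt bounds for the key inequalities
    have hb2 : Real.sqrt ((((n:ℝ)+3)/((n:ℝ)+2))^3)
        ≤ 1 + 3*(1/((n:ℝ)+2))/2 + 3*(1/((n:ℝ)+2))^2/8 := by
      have e : ((n:ℝ)+3)/((n:ℝ)+2) = 1 + 1/((n:ℝ)+2) := by field_simp <;> ring <;> ring
      rw [e]
      exact ub_plus (by positivity)
    have hb3 : Real.sqrt (((n:ℝ)/((n:ℝ)+1))^3)
        ≤ 1 - 3*(1/((n:ℝ)+1))/2 + 3*(1/((n:ℝ)+1))^2/8 + (1/((n:ℝ)+1))^3/8 := by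
      have e : (n:ℝ)/((n:ℝ)+1) = 1 - 1/((n:ℝ)+1) := by field_simp <;> ring <;> ring
      rw [e]
      exact ub_minus (by positivity) (by rw [div_le_iff₀ (by positivity)]; linarith)
    have hlb2 : 1 + 3*(1/((n:ℝ)+2))/2 + 3*(1/((n:ℝ)+2))^2/8 - (1/((n:ℝ)+2))^3/16
        ≤ Real.sqrt ((((n:ℝ)+3)/((n:ℝ)+2))^3) := by
      have e : ((n:ℝ)+3)/((n:ℝ)+2) = 1 + 1/((n:ℝ)+2) := by field_simp <;> ring <;> ring
      rw [e]
      exact lb_plus (by positivity) (by rw [div_le_iff₀ (by positivity)]; linarith)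
    have hlb6 : 1 + 3*(2/((n:ℝ)+2))/2 + 3*(2/((n:ℝ)+2))^2/8 - (2/((n:ℝ)+2))^3/16
        ≤ Real.sqrt ((((n:ℝ)+4)/((n:ℝ)+2))^3) := by
      have e : ((n:ℝ)+4)/((n:ℝ)+2) = 1 + 2/((n:ℝ)+2) := by field_simp <;> ring <;> ring
      rw [e]
      exact lb_plus (by positivity) (by rw [div_le_iff₀ (by positivity)]; linarith)
    have hlb3 : 1 - 3*(1/((n:ℝ)+1))/2 + 3*(1/((n:ℝ)+1))^2/8 + (1/((n:ℝ)+1))^3/16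
        ≤ Real.sqrt (((n:ℝ)/((n:ℝ)+1))^3) := by
      have e : (n:ℝ)/((n:ℝ)+1) = 1 - 1/((n:ℝ)+1) := by field_simp <;> ring <;> ring
      rw [e]
      exact lb_minus (by positivity) (by rw [div_le_iff₀ (by positivity)]; linarith)
    have hlb5 : 1 - 3*((2*(n:ℝ)+3)/(((n:ℝ)+1)*((n:ℝ)+3)))/2
          + 3*((2*(n:ℝ)+3)/(((n:ℝ)+1)*((n:ℝ)+3)))^2/8
          + ((2*(n:ℝ)+3)/(((n:ℝ)+1)*((n:ℝ)+3)))^3/16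
        ≤ Real.sqrt (((n:ℝ)*((n:ℝ)+2)/(((n:ℝ)+1)*((n:ℝ)+3)))^3) := by
      have e : (n:ℝ)*((n:ℝ)+2)/(((n:ℝ)+1)*((n:ℝ)+3))
          = 1 - (2*(n:ℝ)+3)/(((n:ℝ)+1)*((n:ℝ)+3)) := by
        field_simp; ring
      rw [e]
      refine lb_minus (by positivity) ?_
      rw [div_le_iff₀ (by positivity)]
      nlinarith [sq_nonneg ((n:ℝ) - 1)]
    have key1 := keyI hy hb2 hb3
    have key2 := keyII hy hlb2 hlb6 hlb3 hlb5
    -- rewrite the recursion in sqrt terms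
    rw [hdel1, hdel2, hdel3, hq1, hs2, hs3, hTround] at hgsq
    -- positivity of the concrete fractions
    have hA : (0:ℝ) < ((n:ℝ)+3)/((n:ℝ)+2) := by positivity
    have hB : (0:ℝ) < ((n:ℝ)+4)/((n:ℝ)+3) := by positivity
    have hC : (0:ℝ) < ((n:ℝ)+5)/((n:ℝ)+4) := by positivity
    have hcoef : (0:ℝ) < 1/( (((n:ℝ)+4)/((n:ℝ)+3)) * (((n:ℝ)+5)/((n:ℝ)+4)) )
        * Real.sqrt ((((n:ℝ)+2)/((n:ℝ)+1))^3) := by positivity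
    show p (n+1) * p (n+2) < gsq (n+1) ∧ gsq (n+1) < p (n+1) * p (n+2) * p (n+3)
    constructor
    · -- lower bound
      rw [hP2, hP2e, hgsq]
      have hstep1 : Real.sqrt ((((n:ℝ)+3)/((n:ℝ)+2))^3)
            * ((((n:ℝ)+4)/((n:ℝ)+3)) * (((n:ℝ)+5)/((n:ℝ)+4)))
          < 2 * (((n:ℝ)+4)/((n:ℝ)+3)) ^ 2
            + ((n:ℝ)+3)/((n:ℝ)+2) * (((n:ℝ)+4)/((n:ℝ)+3))
            + (((n:ℝ)+4)/((n:ℝ)+3)) * (((n:ℝ)+5)/((n:ℝ)+4))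
            - Real.sqrt ((((n:ℝ)+3)/((n:ℝ)+2))^3) * (((n:ℝ)+4)/((n:ℝ)+3))
              * (((n:ℝ)+5)/((n:ℝ)+4))
            - Real.sqrt (((n:ℝ)/((n:ℝ)+1))^3) * (((n:ℝ)+3)/((n:ℝ)+2))
              * (((n:ℝ)+4)/((n:ℝ)+3))
            - Real.sqrt ((((n:ℝ)+2)/((n:ℝ)+1))^3) / gsq n * (((n:ℝ)+3)/((n:ℝ)+2))
              * (((n:ℝ)+4)/((n:ℝ)+3)) := by
        nlinarith [mul_nonneg hB.le (sub_nonneg.2 key1),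
          mul_pos (mul_pos hA hB) (sub_pos.2 hTup)]
      have hmono := mul_lt_mul_of_pos_left hstep1 hcoef
      have hcancel : 1/( (((n:ℝ)+4)/((n:ℝ)+3)) * (((n:ℝ)+5)/((n:ℝ)+4)) )
            * Real.sqrt ((((n:ℝ)+2)/((n:ℝ)+1))^3)
            * (Real.sqrt ((((n:ℝ)+3)/((n:ℝ)+2))^3)
              * ((((n:ℝ)+4)/((n:ℝ)+3)) * (((n:ℝ)+5)/((n:ℝ)+4))))
          = Real.sqrt ((((n:ℝ)+2)/((n:ℝ)+1))^3)
            * Real.sqrt ((((n:ℝ)+3)/((n:ℝ)+2))^3) := by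
        field_simp
      linarith
    · -- upper bound
      rw [hP3, hP3e, hgsq]
      have hstep2 : 2 * (((n:ℝ)+4)/((n:ℝ)+3)) ^ 2
            + ((n:ℝ)+3)/((n:ℝ)+2) * (((n:ℝ)+4)/((n:ℝ)+3))
            + (((n:ℝ)+4)/((n:ℝ)+3)) * (((n:ℝ)+5)/((n:ℝ)+4))
            - Real.sqrt ((((n:ℝ)+3)/((n:ℝ)+2))^3) * (((n:ℝ)+4)/((n:ℝ)+3))
              * (((n:ℝ)+5)/((n:ℝ)+4))
            - Real.sqrt (((n:ℝ)/((n:ℝ)+1))^3) * (((n:ℝ)+3)/((n:ℝ)+2))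
              * (((n:ℝ)+4)/((n:ℝ)+3))
            - Real.sqrt ((((n:ℝ)+2)/((n:ℝ)+1))^3) / gsq n * (((n:ℝ)+3)/((n:ℝ)+2))
              * (((n:ℝ)+4)/((n:ℝ)+3))
          < Real.sqrt ((((n:ℝ)+4)/((n:ℝ)+2))^3)
            * ((((n:ℝ)+4)/((n:ℝ)+3)) * (((n:ℝ)+5)/((n:ℝ)+4))) := by
        nlinarith [mul_nonneg hB.le (sub_nonneg.2 key2),
          mul_pos (mul_pos hA hB) (sub_pos.2 hTlow)]
      have hmono := mul_lt_mul_of_pos_left hstep2 hcoef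
      have hcancel : 1/( (((n:ℝ)+4)/((n:ℝ)+3)) * (((n:ℝ)+5)/((n:ℝ)+4)) )
            * Real.sqrt ((((n:ℝ)+2)/((n:ℝ)+1))^3)
            * (Real.sqrt ((((n:ℝ)+4)/((n:ℝ)+2))^3)
              * ((((n:ℝ)+4)/((n:ℝ)+3)) * (((n:ℝ)+5)/((n:ℝ)+4))))
          = Real.sqrt ((((n:ℝ)+2)/((n:ℝ)+1))^3)
            * Real.sqrt ((((n:ℝ)+4)/((n:ℝ)+2))^3) := by
        field_simp
      linarith
end
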